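/- arXiv:2205.01448 — 10 statements merged into one kernel-verified Lean document; each statement's English description precedes it below -/
import Mathlib

section
/- For all a in (0,1) and all y in [-a/2, (1-a)/2] with a+y in (0,1), the Kullback-Leibler divergence satisfies D(a ‖ a+y) ≤ 2y²/(a(1-a)). (In fact the stronger bound D(a ‖ a+y) ≤ y²/(a(1-a)) holds.) -/
/-- KL divergence bound: for `a ∈ (0,1)` and `y ∈ [-a/2, (1-a)/2]` with `a+y ∈ (0,1)`,
`D(a ‖ a+y) ≤ 2y²/(a(1-a))`. -/
theorem kl_div_quadratic_bound (a y : ℝ) (ha : a ∈ Set.Ioo (0:ℝ) 1)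
    (hy₁ : -(a/2) ≤ y) (hy₂ : y ≤ (1-a)/2) (hay : a + y ∈ Set.Ioo (0:ℝ) 1) :
    a * Real.log (a / (a + y)) + (1 - a) * Real.log ((1 - a) / (1 - (a + y)))
      ≤ 2 * y^2 / (a * (1 - a)) := by
  obtain ⟨ha0, ha1⟩ := ha
  obtain ⟨hay0, hay1⟩ := hay
  have h1a : (0:ℝ) < 1 - a := by linarith
  have h1ay : (0:ℝ) < 1 - (a + y) := by linarith
  have l1 : Real.log (a / (a + y)) ≤ a / (a + y) - 1 :=
    Real.log_le_sub_one_of_pos (by positivity)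
  have l2 : Real.log ((1 - a) / (1 - (a + y))) ≤ (1 - a) / (1 - (a + y)) - 1 :=
    Real.log_le_sub_one_of_pos (by positivity)
  have step1 : a * Real.log (a / (a + y)) + (1 - a) * Real.log ((1 - a) / (1 - (a + y)))
      ≤ a * (a / (a + y) - 1) + (1 - a) * ((1 - a) / (1 - (a + y)) - 1) :=
    add_le_add (mul_le_mul_of_nonneg_left l1 ha0.le)
      (mul_le_mul_of_nonneg_left l2 h1a.le)
  have hD : a * (a / (a + y) - 1) + (1 - a) * ((1 - a) / (1 - (a + y)) - 1)
      = y ^ 2 / ((a + y) * (1 - (a + y))) := by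
    field_simp
    ring
  have step2 : y ^ 2 / ((a + y) * (1 - (a + y))) ≤ 2 * y ^ 2 / (a * (1 - a)) := by
    rw [div_le_div_iff₀ (by positivity) (by positivity)]
    nlinarith [mul_nonneg (by linarith : (0:ℝ) ≤ y + a / 2)
        (by linarith : (0:ℝ) ≤ (1 - a) / 2 - y),
      mul_nonneg (by linarith : (0:ℝ) ≤ y + a / 2) h1a.le,
      sq_nonneg y, mul_pos ha0 h1a]
  calc a * Real.log (a / (a + y)) + (1 - a) * Real.log ((1 - a) / (1 - (a + y)))
      ≤ y ^ 2 / ((a + y) * (1 - (a + y))) := hD ▸ step1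
    _ ≤ 2 * y ^ 2 / (a * (1 - a)) := step2
end

section
/- Let 0 ≤ k ≤ n be integers with 0 < k < n, and let α = k/n. Then e^{n·H(α)} / √(8·n·α·(1-α)) ≤ binomial(n,k) ≤ e^{n·H(α)} / √(2π·n·α·(1-α)). -/
open Real Stirling Filter

lemma s_pos {j : ℕ} (hj : 0 < j) : 0 < stirlingSeq j := by
  obtain ⟨i, rfl⟩ := Nat.exists_eq_add_of_lt hj
  simpa using stirlingSeq'_pos (0 + i)

lemma s_anti {j i : ℕ} (hj : 0 < j) (h : j ≤ i) : stirlingSeq i ≤ stirlingSeq j := by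
  obtain ⟨a, rfl⟩ := Nat.exists_eq_add_of_lt hj
  obtain ⟨b, rfl⟩ := Nat.exists_eq_add_of_le h
  have := stirlingSeq'_antitone (show 0 + a ≤ 0 + a + b by omega)
  simpa [Function.comp, Nat.succ_eq_add_one, Nat.add_right_comm] using this

lemma s_ge {j : ℕ} (hj : 0 < j) : Real.sqrt π ≤ stirlingSeq j := by
  refine le_of_tendsto tendsto_stirlingSeq_sqrt_pi ?_
  filter_upwards [eventually_ge_atTop j] with i hi
  exact s_anti hj hi

lemma hs2 : stirlingSeq 2 = (exp 1)^2 / 4 := by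
  rw [stirlingSeq]
  rw [show ((Nat.factorial 2 : ℕ) : ℝ) = 2 by norm_num [Nat.factorial]]
  rw [show (2 * ((2:ℕ):ℝ) : ℝ) = 2^2 by norm_num]
  rw [Real.sqrt_sq (by norm_num)]
  rw [div_pow]
  field_simp
  ring

lemma hs3 : stirlingSeq 3 = 2 * (exp 1)^3 / (9 * Real.sqrt 6) := by
  rw [stirlingSeq]
  rw [show ((Nat.factorial 3 : ℕ) : ℝ) = 6 by norm_num [Nat.factorial]]
  rw [show (2 * ((3:ℕ):ℝ) : ℝ) = 6 by norm_num]
  rw [div_pow]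
  have h6 : Real.sqrt 6 ≠ 0 := by positivity
  field_simp
  ring

lemma hsp : (1.772:ℝ) ≤ Real.sqrt π := by
  have h : (3.141592:ℝ) < π := Real.pi_gt_d6
  rw [show (1.772:ℝ) = Real.sqrt (1.772^2) from (Real.sqrt_sq (by norm_num)).symm]
  apply Real.sqrt_le_sqrt; nlinarith

lemma he2 : (exp 1)^2 ≤ 7.3890561 := by
  have h := Real.exp_one_lt_d9
  have h0 := Real.exp_pos 1
  nlinarith

lemma he4 : (exp 1)^4 ≤ 54.599 := by
  have h := he2
  have h0 := Real.exp_pos 1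
  nlinarith [sq_nonneg ((exp 1)^2)]

lemma sqrt2_lb : (1.414:ℝ) ≤ Real.sqrt 2 := by
  rw [show (1.414:ℝ) = Real.sqrt (1.414^2) from (Real.sqrt_sq (by norm_num)).symm]
  apply Real.sqrt_le_sqrt; norm_num

lemma sqrt6_lb : (2.449:ℝ) ≤ Real.sqrt 6 := by
  rw [show (2.449:ℝ) = Real.sqrt (2.449^2) from (Real.sqrt_sq (by norm_num)).symm]
  apply Real.sqrt_le_sqrt; norm_num

lemma sqrt6_ub : Real.sqrt 6 ≤ 2.4495 := by
  rw [show (2.4495:ℝ) = Real.sqrt (2.4495^2) from (Real.sqrt_sq (by norm_num)).symm]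
  apply Real.sqrt_le_sqrt; norm_num

lemma aux13 : stirlingSeq 1 * stirlingSeq 3 ≤ 2 * Real.sqrt π := by
  rw [stirlingSeq_one, hs3]
  have h26 : (3.46:ℝ) ≤ Real.sqrt 2 * Real.sqrt 6 := by
    nlinarith [sqrt2_lb, sqrt6_lb, Real.sqrt_nonneg 2, Real.sqrt_nonneg 6]
  have key : exp 1 / Real.sqrt 2 * (2 * (exp 1)^3 / (9 * Real.sqrt 6))
      = 2 * (exp 1)^4 / (9 * (Real.sqrt 2 * Real.sqrt 6)) := by ring
  rw [key, div_le_iff₀ (by positivity)]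
  nlinarith [hsp, h26, he4, Real.sqrt_nonneg π, Real.sqrt_nonneg 2, Real.sqrt_nonneg 6]

lemma aux22 : stirlingSeq 2 * stirlingSeq 2 ≤ 2 * Real.sqrt π := by
  rw [hs2]
  nlinarith [hsp, he4, Real.exp_pos 1, sq_nonneg ((exp 1)^2)]

lemma aux11 : stirlingSeq 1 * stirlingSeq 1 ≤ 2 * stirlingSeq 2 := by
  rw [stirlingSeq_one, hs2]
  have h2 : Real.sqrt 2 * Real.sqrt 2 = 2 := Real.mul_self_sqrt (by norm_num)
  rw [div_mul_div_comm, h2]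
  ring_nf
  nlinarith [Real.exp_pos 1]

lemma aux12 : stirlingSeq 1 * stirlingSeq 2 ≤ 2 * stirlingSeq 3 := by
  rw [stirlingSeq_one, hs2, hs3]
  have key : (9:ℝ) * Real.sqrt 6 ≤ 16 * Real.sqrt 2 := by
    nlinarith [sqrt6_ub, sqrt2_lb]
  have e3 : (0:ℝ) < (exp 1)^3 := by positivity
  rw [div_mul_div_comm, show (2:ℝ) * (2 * (exp 1)^3 / (9 * Real.sqrt 6)) = 4 * (exp 1)^3 / (9 * Real.sqrt 6) by ring,
    show exp 1 * (exp 1)^2 = (exp 1)^3 by ring,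
    div_le_div_iff₀ (by positivity) (by positivity)]
  nlinarith [mul_le_mul_of_nonneg_left key e3.le]

lemma hr_main {k m : ℕ} (hk : 0 < k) (hm : 0 < m) :
    stirlingSeq k * stirlingSeq m ≤ 2 * stirlingSeq (k + m) := by
  have hn : 0 < k + m := by omega
  have h2pi : 2 * Real.sqrt π ≤ 2 * stirlingSeq (k + m) := by
    have := s_ge hn; linarith
  rcases Nat.lt_or_ge k 2 with hk2 | hk2
  · -- k = 1
    have hk1 : k = 1 := by omega
    subst hk1
    rcases Nat.lt_or_ge m 3 with hm3 | hm3
    · interval_cases m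
      · simpa using aux11
      · exact aux12
    · calc stirlingSeq 1 * stirlingSeq m ≤ stirlingSeq 1 * stirlingSeq 3 := by
            have := s_anti (by norm_num) hm3
            have := s_pos (show 0 < 1 by norm_num)
            nlinarith
        _ ≤ 2 * Real.sqrt π := aux13
        _ ≤ _ := h2pi
  · rcases Nat.lt_or_ge m 2 with hm2 | hm2
    · have hm1 : m = 1 := by omega
      subst hm1
      rcases Nat.lt_or_ge k 3 with hk3 | hk3
      · have : k = 2 := by omega
        subst this
        rw [mul_comm]
        exact aux12.trans (le_of_eq (by norm_num))
      · calc stirlingSeq k * stirlingSeq 1 ≤ stirlingSeq 3 * stirlingSeq 1 := by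
              have := s_anti (show 0 < 3 by norm_num) hk3
              have := s_pos (show 0 < 1 by norm_num)
              nlinarith
          _ ≤ 2 * Real.sqrt π := by rw [mul_comm]; exact aux13
          _ ≤ _ := h2pi
    · calc stirlingSeq k * stirlingSeq m ≤ stirlingSeq 2 * stirlingSeq 2 := by
            have h1 := s_anti (show 0 < 2 by norm_num) hk2
            have h2 := s_anti (show 0 < 2 by norm_num) hm2
            have p1 := s_pos (show 0 < k by omega)
            have p2 := s_pos (show 0 < m by omega)
            have p3 := s_pos (show (0:ℕ) < 2 by norm_num)
            nlinarith
        _ ≤ 2 * Real.sqrt π := aux22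
        _ ≤ _ := h2pi

lemma hfac {j : ℕ} (hj : 0 < j) :
    ((Nat.factorial j : ℕ) : ℝ) = stirlingSeq j * (Real.sqrt (2*(j:ℝ)) * ((j:ℝ)/exp 1)^j) := by
  have hj' : (0:ℝ) < (j:ℝ) := by exact_mod_cast hj
  have hd : Real.sqrt (2*(j:ℝ)) * ((j:ℝ)/exp 1)^j ≠ 0 := by positivity
  rw [stirlingSeq, div_mul_cancel₀ _ hd]




set_option maxHeartbeats 1000000 in
/-- Entropy bound on binomial coefficients: with `α = k/n` and
`H(x) = -x ln x - (1-x) ln(1-x)`,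
`e^{nH(α)}/√(8nα(1-α)) ≤ C(n,k) ≤ e^{nH(α)}/√(2πnα(1-α))`. -/
theorem choose_entropy_bound (n k : ℕ) (hk0 : 0 < k) (hkn : k < n) :
    Real.exp (n * (-((k:ℝ)/n) * Real.log ((k:ℝ)/n)
        - (1 - (k:ℝ)/n) * Real.log (1 - (k:ℝ)/n)))
      / Real.sqrt (8 * n * ((k:ℝ)/n) * (1 - (k:ℝ)/n)) ≤ (n.choose k : ℝ)
    ∧ (n.choose k : ℝ) ≤
      Real.exp (n * (-((k:ℝ)/n) * Real.log ((k:ℝ)/n)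
        - (1 - (k:ℝ)/n) * Real.log (1 - (k:ℝ)/n)))
      / Real.sqrt (2 * Real.pi * n * ((k:ℝ)/n) * (1 - (k:ℝ)/n)) := by
  obtain ⟨m, rfl⟩ : ∃ m, n = k + m := ⟨n - k, by omega⟩
  have hm0 : 0 < m := by omega
  have hK : (0:ℝ) < (k:ℝ) := by exact_mod_cast hk0
  have hM : (0:ℝ) < (m:ℝ) := by exact_mod_cast hm0
  have hN : (0:ℝ) < (k:ℝ) + m := by linarith
  push_cast
  have h1 : (1:ℝ) - (k:ℝ)/((k:ℝ)+m) = (m:ℝ)/((k:ℝ)+m) := by field_simp; ring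
  rw [h1]
  have harg : ((k:ℝ)+m) * (-((k:ℝ)/((k:ℝ)+m)) * Real.log ((k:ℝ)/((k:ℝ)+m))
      - ((m:ℝ)/((k:ℝ)+m)) * Real.log ((m:ℝ)/((k:ℝ)+m)))
      = Real.log (((k:ℝ)+m)^(k+m) / ((k:ℝ)^k * (m:ℝ)^m)) := by
    rw [Real.log_div hK.ne' hN.ne', Real.log_div hM.ne' hN.ne',
        Real.log_div (by positivity) (by positivity),
        Real.log_mul (by positivity) (by positivity),
        Real.log_pow, Real.log_pow, Real.log_pow]
    push_cast
    field_simp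
    ring
  rw [harg, Real.exp_log (by positivity)]
  -- abbreviations (plain terms)
  have ha2 : Real.sqrt (2*(k:ℝ)) ^ 2 = 2*(k:ℝ) := Real.sq_sqrt (by positivity)
  have hb2 : Real.sqrt (2*(m:ℝ)) ^ 2 = 2*(m:ℝ) := Real.sq_sqrt (by positivity)
  have hc2 : Real.sqrt (2*((k:ℝ)+m)) ^ 2 = 2*((k:ℝ)+m) := Real.sq_sqrt (by positivity)
  have hp2 : Real.sqrt π ^ 2 = π := Real.sq_sqrt Real.pi_pos.le
  have ha : (0:ℝ) < Real.sqrt (2*(k:ℝ)) := Real.sqrt_pos.2 (by positivity)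
  have hb : (0:ℝ) < Real.sqrt (2*(m:ℝ)) := Real.sqrt_pos.2 (by positivity)
  have hc : (0:ℝ) < Real.sqrt (2*((k:ℝ)+m)) := Real.sqrt_pos.2 (by positivity)
  have hpp : (0:ℝ) < Real.sqrt π := Real.sqrt_pos.2 Real.pi_pos
  have hsk : 0 < stirlingSeq k := s_pos hk0
  have hsm : 0 < stirlingSeq m := s_pos hm0
  have hsn : 0 < stirlingSeq (k+m) := s_pos (by omega)
  have hs8 : Real.sqrt (8*((k:ℝ)+m)*((k:ℝ)/((k:ℝ)+m))*((m:ℝ)/((k:ℝ)+m)))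
      = 2 * Real.sqrt (2*(k:ℝ)) * Real.sqrt (2*(m:ℝ)) / Real.sqrt (2*((k:ℝ)+m)) := by
    rw [show 8*((k:ℝ)+m)*((k:ℝ)/((k:ℝ)+m))*((m:ℝ)/((k:ℝ)+m))
        = (2 * Real.sqrt (2*(k:ℝ)) * Real.sqrt (2*(m:ℝ)) / Real.sqrt (2*((k:ℝ)+m)))^2 by
      rw [div_pow, mul_pow, mul_pow, ha2, hb2, hc2]; field_simp; ring]
    exact Real.sqrt_sq (by positivity)
  have hspi : Real.sqrt (2*π*((k:ℝ)+m)*((k:ℝ)/((k:ℝ)+m))*((m:ℝ)/((k:ℝ)+m)))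
      = Real.sqrt π * Real.sqrt (2*(k:ℝ)) * Real.sqrt (2*(m:ℝ)) / Real.sqrt (2*((k:ℝ)+m)) := by
    rw [show 2*π*((k:ℝ)+m)*((k:ℝ)/((k:ℝ)+m))*((m:ℝ)/((k:ℝ)+m))
        = (Real.sqrt π * Real.sqrt (2*(k:ℝ)) * Real.sqrt (2*(m:ℝ)) / Real.sqrt (2*((k:ℝ)+m)))^2 by
      rw [div_pow, mul_pow, mul_pow, ha2, hb2, hc2, hp2]; field_simp]
    exact Real.sqrt_sq (by positivity)
  have hCE : (((k+m).choose k : ℕ) : ℝ)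
      = (stirlingSeq (k+m) / (stirlingSeq k * stirlingSeq m))
        * (Real.sqrt (2*((k:ℝ)+m)) / (Real.sqrt (2*(k:ℝ)) * Real.sqrt (2*(m:ℝ))))
        * (((k:ℝ)+m)^(k+m) / ((k:ℝ)^k * (m:ℝ)^m)) := by
    rw [Nat.cast_choose ℝ (show k ≤ k + m by omega)]
    rw [show k + m - k = m by omega]
    rw [hfac hk0, hfac hm0, hfac (show 0 < k + m by omega)]
    push_cast
    have he : Real.exp 1 ≠ 0 := (Real.exp_pos 1).ne'
    field_simp
    rw [div_pow, div_pow, div_pow]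
    ring
  rw [hs8, hspi, hCE]
  constructor
  · have key : (((k:ℝ)+m)^(k+m) / ((k:ℝ)^k * (m:ℝ)^m))
        / (2 * Real.sqrt (2*(k:ℝ)) * Real.sqrt (2*(m:ℝ)) / Real.sqrt (2*((k:ℝ)+m)))
        = (1/2) * (Real.sqrt (2*((k:ℝ)+m)) / (Real.sqrt (2*(k:ℝ)) * Real.sqrt (2*(m:ℝ))))
          * (((k:ℝ)+m)^(k+m) / ((k:ℝ)^k * (m:ℝ)^m)) := by
      field_simp
    rw [key]
    have h12 : (1:ℝ)/2 ≤ stirlingSeq (k+m) / (stirlingSeq k * stirlingSeq m) := by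
      rw [le_div_iff₀ (by positivity)]
      nlinarith [hr_main hk0 hm0]
    exact mul_le_mul_of_nonneg_right
      (mul_le_mul_of_nonneg_right h12 (by positivity)) (by positivity)
  · have key : (((k:ℝ)+m)^(k+m) / ((k:ℝ)^k * (m:ℝ)^m))
        / (Real.sqrt π * Real.sqrt (2*(k:ℝ)) * Real.sqrt (2*(m:ℝ)) / Real.sqrt (2*((k:ℝ)+m)))
        = (1/Real.sqrt π) * (Real.sqrt (2*((k:ℝ)+m)) / (Real.sqrt (2*(k:ℝ)) * Real.sqrt (2*(m:ℝ))))
          * (((k:ℝ)+m)^(k+m) / ((k:ℝ)^k * (m:ℝ)^m)) := by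
      field_simp
    rw [key]
    have hπr : stirlingSeq (k+m) / (stirlingSeq k * stirlingSeq m) ≤ 1/Real.sqrt π := by
      rw [div_le_div_iff₀ (by positivity) hpp]
      have h1' : stirlingSeq (k+m) ≤ stirlingSeq m := s_anti hm0 (by omega)
      have h2' : Real.sqrt π ≤ stirlingSeq k := s_ge hk0
      nlinarith
    exact mul_le_mul_of_nonneg_right
      (mul_le_mul_of_nonneg_right hπr (by positivity)) (by positivity)
end

section
/- Let X ~ Hypergeometric(N, K, M) with 0 ≤ ℓ ≤ M an integer, ℓ < K, and M - ℓ < N - K. Put a = ℓ/M, b = K/N, x = M/N. Then Pr[X = ℓ] ≥ √(π/32) · √((1-x)/(M·a·(1-a))) · e^{-F}, where F = (D(a ‖ b) + (x/(1-x)) · (a-b)²/(2(b - a·x)((1-b) - (1-a)·x))) · M. -/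
set_option maxHeartbeats 1000000

open Filter Real Stirling Nat Set Topology



lemma sqrt_pi_le_stirlingSeq (n : ℕ) : √π ≤ stirlingSeq (n + 1) := by
  have ht : Tendsto (stirlingSeq ∘ Nat.succ) atTop (𝓝 (√π)) :=
    tendsto_stirlingSeq_sqrt_pi.comp (tendsto_add_atTop_nat 1)
  exact stirlingSeq'_antitone.le_of_tendsto ht n

lemma log_stirlingSeq_diff_le_third (m : ℕ) :
    log (stirlingSeq (m + 1)) - log (stirlingSeq (m + 2)) ≤
      1 / (12 * ((m:ℝ) + 1) * ((m:ℝ) + 2)) := by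
  set T : ℝ := ((1 : ℝ) / (2 * ↑(m + 1) + 1)) ^ 2 with hT
  have hT0 : (0:ℝ) < T := by positivity
  have hT1 : T < 1 := by
    rw [hT, one_div, inv_pow]
    exact inv_lt_one_of_one_lt₀ (one_lt_pow₀ (lt_add_of_pos_left _ <| by positivity) two_ne_zero)
  have g : HasSum (fun k : ℕ => (1/3:ℝ) * T ^ (k+1)) ((1/3) * (T / (1 - T))) := by
    have := (hasSum_geometric_of_lt_one hT0.le hT1).mul_left T
    simp_rw [← _root_.pow_succ'] at this
    exact this.mul_left (1/3)
  have hab : ∀ k : ℕ, (1 : ℝ) / (2 * ↑(k + 1) + 1) * T ^ (k+1) ≤ (1/3) * T ^ (k+1) := by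
    intro k
    have : (3:ℝ) ≤ 2 * ↑(k+1) + 1 := by push_cast; linarith [Nat.cast_nonneg (α := ℝ) k]
    gcongr
  have key := hasSum_le hab (log_stirlingSeq_diff_hasSum m) g
  refine key.trans (le_of_eq ?_)
  rw [hT]
  have hc : (2 * ((m:ℝ) + 1) + 1) ≠ 0 := by positivity
  push_cast
  rw [div_pow, one_pow]
  rw [eq_div_iff (by positivity)]
  field_simp
  ring_nf
  have hm : (24 + (m:ℝ)*36 + (m:ℝ)^2*12) ≠ 0 := by positivity
  field_simp
  ring

lemma log_stirlingSeq_le (n : ℕ) :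
    log (stirlingSeq (n + 1)) ≤ log (√π) + 1 / (12 * ((n:ℝ) + 1)) := by
  set e : ℕ → ℝ := fun m => log (stirlingSeq (m + 1)) - 1 / (12 * ((m:ℝ) + 1)) with he
  have hmono : Monotone e := by
    apply monotone_nat_of_le_succ
    intro m
    have hd := log_stirlingSeq_diff_le_third m
    have : 1 / (12 * ((m:ℝ) + 1)) - 1 / (12 * ((m:ℝ) + 2)) = 1 / (12 * ((m:ℝ)+1) * ((m:ℝ)+2)) := by
      field_simp
      ring
    simp only [he]
    rw [show m+1+1 = m+2 from rfl]
    push_cast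
    have h12 : (1:ℝ)/(12*((m:ℝ)+1+1)) = 1/(12*((m:ℝ)+2)) := by ring_nf
    linarith
  have htend : Tendsto e atTop (𝓝 (log (√π))) := by
    have h1 : Tendsto (fun m : ℕ => log (stirlingSeq (m + 1))) atTop (𝓝 (log (√π))) := by
      have : Tendsto (stirlingSeq ∘ Nat.succ) atTop (𝓝 (√π)) :=
        tendsto_stirlingSeq_sqrt_pi.comp (tendsto_add_atTop_nat 1)
      exact ((Real.continuousAt_log (by positivity)).tendsto.comp this)
    have h2 : Tendsto (fun m : ℕ => 1 / (12 * ((m:ℝ) + 1))) atTop (𝓝 0) := by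
      have := tendsto_one_div_add_atTop_nhds_zero_nat.const_mul (1/12 : ℝ)
      rw [mul_zero] at this
      refine this.congr (fun m => ?_)
      field_simp
    have := h1.sub h2
    rwa [sub_zero] at this
  have := hmono.ge_of_tendsto htend n
  simp only [he] at this
  linarith

lemma factorial_stirling_lower (n : ℕ) (hn : n ≠ 0) :
    Real.sqrt (2*π*n) * ((n:ℝ)/Real.exp 1)^n ≤ (n ! : ℝ) := by
  obtain ⟨m, rfl⟩ := Nat.exists_eq_succ_of_ne_zero hn
  have h := sqrt_pi_le_stirlingSeq m
  have hd : (0:ℝ) < Real.sqrt (2*((m+1:ℕ):ℝ)) * (((m+1:ℕ):ℝ)/Real.exp 1)^(m+1) := by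
    have : (0:ℝ) < ((m+1:ℕ):ℝ) := by positivity
    positivity
  rw [stirlingSeq, le_div_iff₀ hd] at h
  have hsq : Real.sqrt π * Real.sqrt (2*((m+1:ℕ):ℝ)) = Real.sqrt (2*π*((m+1:ℕ):ℝ)) := by
    rw [← Real.sqrt_mul pi_nonneg]
    ring_nf
  calc Real.sqrt (2*π*((m+1:ℕ):ℝ)) * (((m+1:ℕ):ℝ)/Real.exp 1)^(m+1)
      = Real.sqrt π * (Real.sqrt (2*((m+1:ℕ):ℝ)) * (((m+1:ℕ):ℝ)/Real.exp 1)^(m+1)) := by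
        rw [← hsq]; ring
    _ ≤ ((m+1)! : ℝ) := h

lemma factorial_stirling_upper (n : ℕ) (hn : n ≠ 0) :
    (n ! : ℝ) ≤ Real.sqrt (2*π*n) * ((n:ℝ)/Real.exp 1)^n * Real.exp (1/(12*n)) := by
  obtain ⟨m, rfl⟩ := Nat.exists_eq_succ_of_ne_zero hn
  have h := log_stirlingSeq_le m
  have hpos := stirlingSeq'_pos m
  have h2 : stirlingSeq (m+1) ≤ Real.sqrt π * Real.exp (1/(12*((m:ℝ)+1))) := by
    have := Real.exp_le_exp.mpr h
    rwa [Real.exp_log hpos, Real.exp_add, Real.exp_log (by positivity)] at this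
  have hd : (0:ℝ) < Real.sqrt (2*((m+1:ℕ):ℝ)) * (((m+1:ℕ):ℝ)/Real.exp 1)^(m+1) := by
    have : (0:ℝ) < ((m+1:ℕ):ℝ) := by positivity
    positivity
  rw [stirlingSeq, div_le_iff₀ hd] at h2
  have hsq : Real.sqrt π * Real.sqrt (2*((m+1:ℕ):ℝ)) = Real.sqrt (2*π*((m+1:ℕ):ℝ)) := by
    rw [← Real.sqrt_mul pi_nonneg]
    ring_nf
  have hc : ((m+1:ℕ):ℝ) = (m:ℝ)+1 := by push_cast; ring
  calc ((m+1)! : ℝ) ≤ Real.sqrt π * Real.exp (1/(12*((m:ℝ)+1)))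
        * (Real.sqrt (2*((m+1:ℕ):ℝ)) * (((m+1:ℕ):ℝ)/Real.exp 1)^(m+1)) := h2
    _ = Real.sqrt (2*π*((m+1:ℕ):ℝ)) * (((m+1:ℕ):ℝ)/Real.exp 1)^(m+1)
        * Real.exp (1/(12*((m+1:ℕ):ℝ))) := by rw [← hsq, hc]; ring



lemma quad_lower (u b m t : ℝ) (hmu : m ≤ u*(1-u)) (hmb : m ≤ b*(1-b))
    (h1 : u ≤ t) (h2 : t ≤ b) : m ≤ t*(1-t) := by
  rcases le_or_gt (t + b) 1 with h | h
  · nlinarith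
  · nlinarith

lemma kl_le_sq (u b m : ℝ) (hu0 : 0 < u) (hu1 : u < 1) (hb0 : 0 < b) (hb1 : b < 1)
    (hm : 0 < m) (hmu : m ≤ u*(1-u)) (hmb : m ≤ b*(1-b)) :
    u * Real.log (u/b) + (1-u) * Real.log ((1-u)/(1-b)) ≤ (u-b)^2/(2*m) := by
  set PHI : ℝ → ℝ := fun t => (t-u)^2/(2*m) + u * Real.log t + (1-u) * Real.log (1-t) with hPHI
  -- derivative of PHI
  have hderiv : ∀ t, 0 < t → t < 1 →
      HasDerivAt PHI ((t-u)*(1/m - 1/(t*(1-t)))) t := by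
    intro t ht0 ht1
    have h1t : (0:ℝ) < 1 - t := by linarith
    have hin : HasDerivAt (fun t : ℝ => 1 - t) (-1) t := by
      simpa using (hasDerivAt_id' t).const_sub (1:ℝ)
    have D := (((((hasDerivAt_id t).sub_const u).pow 2).div_const (2*m)).add
      ((Real.hasDerivAt_log ht0.ne').const_mul u)).add
      (((Real.hasDerivAt_log h1t.ne').comp t hin).const_mul (1-u))
    refine D.congr_deriv ?_
    have hq : (0:ℝ) < t*(1-t) := by positivity
    simp only [id]
    field_simp
    ring
  have goal_iff : u * Real.log (u/b) + (1-u) * Real.log ((1-u)/(1-b)) ≤ (u-b)^2/(2*m)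
      ↔ PHI u ≤ PHI b := by
    rw [hPHI]
    simp only
    rw [Real.log_div hu0.ne' hb0.ne', Real.log_div (by linarith : (0:ℝ) < 1-u).ne' (by linarith : (0:ℝ) < 1-b).ne']
    rw [show ((u-u)^2 : ℝ) = 0 from by ring, show ((b-u)^2 : ℝ) = (u-b)^2 from by ring, zero_div]
    constructor <;> intro h <;> linarith
  rw [goal_iff]
  rcases lt_trichotomy u b with hub | hub | hub
  · -- monotone on [u, b]
    have hsub : Icc u b ⊆ Ioo 0 1 := fun t ht => ⟨lt_of_lt_of_le hu0 ht.1, lt_of_le_of_lt ht.2 hb1⟩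
    have hmono : MonotoneOn PHI (Icc u b) := by
      apply monotoneOn_of_deriv_nonneg (convex_Icc u b)
      · intro t ht
        exact (hderiv t (hsub ht).1 (hsub ht).2).continuousAt.continuousWithinAt
      · intro t ht
        rw [interior_Icc] at ht
        exact (hderiv t (lt_trans hu0 ht.1) (ht.2.trans hb1)).differentiableAt.differentiableWithinAt
      · intro t ht
        rw [interior_Icc] at ht
        have h0 : 0 < t := lt_trans hu0 ht.1
        have h1 : t < 1 := lt_trans ht.2 hb1
        rw [(hderiv t h0 h1).deriv]
        have hq : m ≤ t*(1-t) := quad_lower u b m t hmu hmb ht.1.le ht.2.le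
        have hq0 : 0 < t*(1-t) := by nlinarith
        have : 1/(t*(1-t)) ≤ 1/m := by
          apply one_div_le_one_div_of_le hm hq
        have htu : 0 ≤ t - u := by linarith [ht.1]
        nlinarith
    exact hmono (left_mem_Icc.mpr hub.le) (right_mem_Icc.mpr hub.le) hub.le
  · rw [hub]
  · -- antitone on [b, u]
    have hsub : Icc b u ⊆ Ioo 0 1 := fun t ht => ⟨lt_of_lt_of_le hb0 ht.1, lt_of_le_of_lt ht.2 hu1⟩
    have hanti : AntitoneOn PHI (Icc b u) := by
      apply antitoneOn_of_deriv_nonpos (convex_Icc b u)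
      · intro t ht
        exact (hderiv t (hsub ht).1 (hsub ht).2).continuousAt.continuousWithinAt
      · intro t ht
        rw [interior_Icc] at ht
        exact (hderiv t (lt_trans hb0 ht.1) (ht.2.trans hu1)).differentiableAt.differentiableWithinAt
      · intro t ht
        rw [interior_Icc] at ht
        have h0 : 0 < t := lt_trans hb0 ht.1
        have h1 : t < 1 := lt_trans ht.2 hu1
        rw [(hderiv t h0 h1).deriv]
        have hq : m ≤ t*(1-t) := quad_lower b u m t hmb hmu ht.1.le ht.2.le
        have hq0 : 0 < t*(1-t) := by nlinarith
        have : 1/(t*(1-t)) ≤ 1/m := by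
          apply one_div_le_one_div_of_le hm hq
        have htu : t - u ≤ 0 := by linarith [ht.2]
        nlinarith
    exact hanti (left_mem_Icc.mpr hub.le) (right_mem_Icc.mpr hub.le) hub.le

lemma log4 (a b c d : ℝ) (ha : 0 < a) (hb : 0 < b) (hc : 0 < c) (hd : 0 < d) :
    Real.log ((a/c)/(b/d)) = Real.log a + Real.log d - Real.log c - Real.log b := by
  rw [Real.log_div (by positivity) (by positivity), Real.log_div ha.ne' hc.ne',
    Real.log_div hb.ne' hd.ne']
  ring

lemma keyI (P Q R S : ℝ) (hP : 1 ≤ P) (hQ : 1 ≤ Q) (hR : 1 ≤ R) (hS : 1 ≤ S) :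
    -(((P/(P+R)) * Real.log ((P/(P+R)) / ((P+Q)/(P+Q+R+S)))
        + (1 - P/(P+R)) * Real.log ((1 - P/(P+R)) / (1 - (P+Q)/(P+Q+R+S)))
      + ((P+R)/(P+Q+R+S)) / (1 - (P+R)/(P+Q+R+S))
        * (P/(P+R) - (P+Q)/(P+Q+R+S))^2
        / (2 * ((P+Q)/(P+Q+R+S) - P/(P+R) * ((P+R)/(P+Q+R+S)))
            * ((1 - (P+Q)/(P+Q+R+S)) - (1 - P/(P+R)) * ((P+R)/(P+Q+R+S))))) * (P+R))
    ≤ (P+Q)*Real.log (P+Q) + (R+S)*Real.log (R+S) + (P+R)*Real.log (P+R) + (Q+S)*Real.log (Q+S)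
      - P*Real.log P - Q*Real.log Q - R*Real.log R - S*Real.log S
      - (P+Q+R+S)*Real.log (P+Q+R+S) := by
  have hP0 : (0:ℝ) < P := by linarith
  have hQ0 : (0:ℝ) < Q := by linarith
  have hR0 : (0:ℝ) < R := by linarith
  have hS0 : (0:ℝ) < S := by linarith
  have hPQ0 : (0:ℝ) < P+Q := by linarith
  have hRS0 : (0:ℝ) < R+S := by linarith
  have hPR0 : (0:ℝ) < P+R := by linarith
  have hQS0 : (0:ℝ) < Q+S := by linarith
  have hn0 : (0:ℝ) < P+Q+R+S := by linarith
  have h1 : 1 - P/(P+R) = R/(P+R) := by field_simp; ring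
  have h2 : 1 - (P+Q)/(P+Q+R+S) = (R+S)/(P+Q+R+S) := by
    field_simp
    ring
  have h3 : 1 - (P+R)/(P+Q+R+S) = (Q+S)/(P+Q+R+S) := by
    field_simp
    ring
  have h4 : (P+Q)/(P+Q+R+S) - P/(P+R) * ((P+R)/(P+Q+R+S)) = Q/(P+Q+R+S) := by
    field_simp
    ring
  have h5 : (R+S)/(P+Q+R+S) - R/(P+R) * ((P+R)/(P+Q+R+S)) = S/(P+Q+R+S) := by
    field_simp
    ring
  rw [h1, h2, h3, h4, h5]
  rw [log4 P (P+Q) (P+R) (P+Q+R+S) hP0 hPQ0 hPR0 hn0,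
      log4 R (R+S) (P+R) (P+Q+R+S) hR0 hRS0 hPR0 hn0]
  -- KL bound
  have hu0 : (0:ℝ) < Q/(Q+S) := by positivity
  have hu1 : Q/(Q+S) < 1 := by rw [div_lt_one hQS0]; linarith
  have hb0 : (0:ℝ) < (P+Q)/(P+Q+R+S) := by positivity
  have hb1 : (P+Q)/(P+Q+R+S) < 1 := by rw [div_lt_one hn0]; linarith
  have hm0 : (0:ℝ) < Q*S/(P+Q+R+S)^2 := by positivity
  have hmu : Q*S/(P+Q+R+S)^2 ≤ (Q/(Q+S))*(1-Q/(Q+S)) := by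
    rw [show 1 - Q/(Q+S) = S/(Q+S) from by field_simp; ring]
    rw [_root_.div_mul_div_comm, div_le_div_iff₀ (by positivity) (by positivity)]
    have hqs : (Q+S)*(Q+S) ≤ (P+Q+R+S)^2 := by nlinarith
    nlinarith [mul_le_mul_of_nonneg_left hqs (le_of_lt (mul_pos hQ0 hS0))]
  have hmb : Q*S/(P+Q+R+S)^2 ≤ ((P+Q)/(P+Q+R+S))*(1-(P+Q)/(P+Q+R+S)) := by
    rw [h2]
    have hnum : Q*S ≤ (P+Q)*(R+S) := by nlinarith
    calc Q*S/(P+Q+R+S)^2 ≤ (P+Q)*(R+S)/(P+Q+R+S)^2 := by gcongr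
      _ = ((P+Q)/(P+Q+R+S))*((R+S)/(P+Q+R+S)) := by rw [sq, _root_.div_mul_div_comm]
  have hkl := kl_le_sq (Q/(Q+S)) ((P+Q)/(P+Q+R+S)) (Q*S/(P+Q+R+S)^2)
    hu0 hu1 hb0 hb1 hm0 hmu hmb
  rw [show (1:ℝ) - Q/(Q+S) = S/(Q+S) from by field_simp; ring, h2,
      log4 Q (P+Q) (Q+S) (P+Q+R+S) hQ0 hPQ0 hQS0 hn0,
      log4 S (R+S) (Q+S) (P+Q+R+S) hS0 hRS0 hQS0 hn0] at hkl
  set a1 := Real.log P with ha1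
  set a2 := Real.log Q with ha2
  set a3 := Real.log R with ha3
  set a4 := Real.log S with ha4
  set a5 := Real.log (P+Q) with ha5
  set a6 := Real.log (R+S) with ha6
  set a7 := Real.log (P+R) with ha7
  set a8 := Real.log (Q+S) with ha8
  set a9 := Real.log (P+Q+R+S) with ha9
  have hkl2 : (Q+S) * (Q/(Q+S) * (a2 + a9 - a8 - a5)
        + S/(Q+S) * (a4 + a9 - a8 - a6))
      ≤ (Q*R-P*S)^2/(2*(Q*S)*(Q+S)) := by
    refine (mul_le_mul_of_nonneg_left hkl (le_of_lt hQS0)).trans_eq ?_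
    field_simp
    ring
  have hexpand : (P/(P+R) * (a1 + a9 - a7 - a5)
        + R/(P+R) * (a3 + a9 - a7 - a6)
      + ((P+R)/(P+Q+R+S)) / ((Q+S)/(P+Q+R+S))
        * (P/(P+R) - (P+Q)/(P+Q+R+S))^2
        / (2 * (Q/(P+Q+R+S)) * (S/(P+Q+R+S)))) * (P+R)
      = P * (a1 + a9 - a7 - a5)
        + R * (a3 + a9 - a7 - a6)
        + (Q*R-P*S)^2/(2*(Q*S)*(Q+S)) := by
    field_simp
    ring
  rw [hexpand]
  have hident : (P+Q)*a5 + (R+S)*a6 + (P+R)*a7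
        + (Q+S)*a8
      - P*a1 - Q*a2 - R*a3 - S*a4
      - (P+Q+R+S)*a9
      = -((Q+S) * (Q/(Q+S) * (a2 + a9 - a8 - a5)
        + S/(Q+S) * (a4 + a9 - a8 - a6)))
        - P * (a1 + a9 - a7 - a5)
        - R * (a3 + a9 - a7 - a6) := by
    field_simp
    ring
  linarith [hkl2]


lemma exp_le_inv_one_sub {x : ℝ} (h1 : x < 1) : Real.exp x ≤ 1/(1-x) := by
  have h3 : 0 < 1 - x := by linarith
  have h2 := Real.add_one_le_exp (-x)
  rw [le_div_iff₀ h3]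
  have h5 : Real.exp x * Real.exp (-x) = 1 := by rw [← Real.exp_add]; simp
  nlinarith [mul_le_mul_of_nonneg_left h2 (Real.exp_pos x).le, h5]

lemma log_ratio_ge (Q : ℝ) (hQ : 1 ≤ Q) (P : ℝ) (hP : 1 ≤ P) :
    1/(6*Q) ≤ Real.log (P+Q) - Real.log Q := by
  have hQ0 : (0:ℝ) < Q := by linarith
  have h1 : Real.log Q - Real.log (Q+1) ≤ Q/(Q+1) - 1 := by
    have := Real.log_le_sub_one_of_pos (show (0:ℝ) < Q/(Q+1) by positivity)
    rwa [Real.log_div hQ0.ne' (by positivity)] at this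
  have h2 : Real.log (Q+1) ≤ Real.log (P+Q) :=
    Real.log_le_log (by positivity) (by linarith)
  have h3 : Q/(Q+1) - 1 = -(1/(Q+1)) := by field_simp; ring
  have h4 : 1/(6*Q) ≤ 1/(Q+1) := by
    apply one_div_le_one_div_of_le (by positivity)
    linarith
  linarith

lemma log_pi_bound : Real.log π ≤ 2 * Real.log 2 - 3/16 := by
  have h1 : Real.exp (-(3/16) : ℝ) ≥ 13/16 := by
    have := Real.add_one_le_exp (-(3/16) : ℝ)
    linarith
  have h2 : (π : ℝ) ≤ 4 * Real.exp (-(3/16) : ℝ) := by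
    nlinarith [Real.pi_lt_d2]
  have h3 := Real.log_le_log Real.pi_pos h2
  rw [Real.log_mul (by norm_num) (Real.exp_ne_zero _), Real.log_exp,
    show (4:ℝ) = 2^2 by norm_num, Real.log_pow] at h3
  push_cast at h3
  linarith

lemma keyII_log (P Q R S : ℝ) (hP : 1 ≤ P) (hQ : 1 ≤ Q) (hR : 1 ≤ R) (hS : 1 ≤ S) :
    1/(12*P) + 1/(12*Q) + 1/(12*R) + 1/(12*S) + 1/(12*(P+Q+R+S))
      ≤ (Real.log (P+Q) - Real.log Q)/2 + (Real.log (R+S) - Real.log S)/2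
        + 2 * Real.log 2 - Real.log π := by
  have hQ6 := log_ratio_ge Q hQ P hP
  have hS6 := log_ratio_ge S hS R hR
  have b1 : 1/(12*P) ≤ 1/12 := by
    apply one_div_le_one_div_of_le (by norm_num)
    linarith
  have b2 : 1/(12*R) ≤ 1/12 := by
    apply one_div_le_one_div_of_le (by norm_num)
    linarith
  have b3 : 1/(12*(P+Q+R+S)) ≤ 1/48 := by
    apply one_div_le_one_div_of_le (by norm_num)
    linarith
  have b4 : 1/(12*Q) = 1/(6*Q)/2 := by ring
  have b5 : 1/(12*S) = 1/(6*S)/2 := by ring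
  have := log_pi_bound
  have hq2 : 1/(6*Q)/2 ≤ (Real.log (P+Q) - Real.log Q)/2 := by linarith
  have hs2 : 1/(6*S)/2 ≤ (Real.log (R+S) - Real.log S)/2 := by linarith
  linarith


noncomputable def gfun (X : ℝ) : ℝ := Real.sqrt (2*π*X) * Real.exp (X * Real.log X - X)

lemma gfun_eq (X : ℝ) (hX : 0 < X) :
    gfun X = Real.exp ((Real.log 2 + Real.log π + Real.log X)/2 + (X * Real.log X - X)) := by
  rw [gfun, Real.exp_add]
  congr 1
  rw [Real.sqrt_eq_rpow, Real.rpow_def_of_pos (by positivity),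
    Real.log_mul (by positivity) hX.ne', Real.log_mul two_ne_zero (ne_of_gt Real.pi_pos)]
  ring_nf

lemma coreIneq (P Q R S : ℝ) (hP : 1 ≤ P) (hQ : 1 ≤ Q) (hR : 1 ≤ R) (hS : 1 ≤ S) :
    Real.sqrt (π/32)
      * Real.sqrt ((1 - (P+R)/(P+Q+R+S)) / ((P+R) * (P/(P+R)) * (1 - P/(P+R))))
      * Real.exp (-(((P/(P+R)) * Real.log ((P/(P+R)) / ((P+Q)/(P+Q+R+S)))
            + (1 - P/(P+R)) * Real.log ((1 - P/(P+R)) / (1 - (P+Q)/(P+Q+R+S)))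
          + ((P+R)/(P+Q+R+S)) / (1 - (P+R)/(P+Q+R+S))
            * (P/(P+R) - (P+Q)/(P+Q+R+S))^2
            / (2 * ((P+Q)/(P+Q+R+S) - P/(P+R) * ((P+R)/(P+Q+R+S)))
                * ((1 - (P+Q)/(P+Q+R+S)) - (1 - P/(P+R)) * ((P+R)/(P+Q+R+S))))) * (P+R)))
    ≤ gfun (P+Q) * gfun (R+S) * gfun (P+R) * gfun (Q+S) /
      (gfun P * gfun Q * gfun R * gfun S * gfun (P+Q+R+S)
        * Real.exp (1/(12*P) + 1/(12*Q) + 1/(12*R) + 1/(12*S) + 1/(12*(P+Q+R+S)))) := by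
  have hP0 : (0:ℝ) < P := by linarith
  have hQ0 : (0:ℝ) < Q := by linarith
  have hR0 : (0:ℝ) < R := by linarith
  have hS0 : (0:ℝ) < S := by linarith
  have hPQ0 : (0:ℝ) < P+Q := by linarith
  have hRS0 : (0:ℝ) < R+S := by linarith
  have hPR0 : (0:ℝ) < P+R := by linarith
  have hQS0 : (0:ℝ) < Q+S := by linarith
  have hn0 : (0:ℝ) < P+Q+R+S := by linarith
  have harg : (1 - (P+R)/(P+Q+R+S)) / ((P+R) * (P/(P+R)) * (1 - P/(P+R)))
      = (Q+S)*(P+R)/((P+Q+R+S)*P*R) := by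
    rw [show 1 - P/(P+R) = R/(P+R) from by field_simp; ring,
        show 1 - (P+R)/(P+Q+R+S) = (Q+S)/(P+Q+R+S) from by field_simp; ring]
    field_simp
  rw [harg]
  have s1 : Real.sqrt (π/32) = Real.exp ((Real.log π - 5 * Real.log 2)/2) := by
    rw [Real.sqrt_eq_rpow, Real.rpow_def_of_pos (by positivity),
      Real.log_div (ne_of_gt Real.pi_pos) (by norm_num),
      show (32:ℝ) = 2^5 by norm_num, Real.log_pow]
    congr 1
    push_cast
    ring
  have s2 : Real.sqrt ((Q+S)*(P+R)/((P+Q+R+S)*P*R))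
      = Real.exp ((Real.log (Q+S) + Real.log (P+R) - Real.log (P+Q+R+S)
          - Real.log P - Real.log R)/2) := by
    rw [Real.sqrt_eq_rpow, Real.rpow_def_of_pos (by positivity),
      Real.log_div (by positivity) (by positivity),
      Real.log_mul (by positivity) (by positivity),
      Real.log_mul (by positivity) (by positivity),
      Real.log_mul (by positivity) (by positivity)]
    congr 1
    ring
  rw [s1, s2, gfun_eq _ hPQ0, gfun_eq _ hRS0, gfun_eq _ hPR0, gfun_eq _ hQS0,
    gfun_eq _ hP0, gfun_eq _ hQ0, gfun_eq _ hR0, gfun_eq _ hS0, gfun_eq _ hn0]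
  rw [← Real.exp_add, ← Real.exp_add, ← Real.exp_add, ← Real.exp_add, ← Real.exp_add,
    ← Real.exp_add, ← Real.exp_add, ← Real.exp_add, ← Real.exp_add, ← Real.exp_add,
    ← Real.exp_sub, Real.exp_le_exp]
  have k1 := keyI P Q R S hP hQ hR hS
  have k2 := keyII_log P Q R S hP hQ hR hS
  linarith [k1, k2]

lemma pow_div_exp_eq (k : ℕ) (hk : k ≠ 0) :
    (((k:ℝ))/Real.exp 1)^(k:ℕ) = Real.exp ((k:ℝ) * Real.log k - k) := by
  have hk0 : (0:ℝ) < k := by exact_mod_cast Nat.pos_of_ne_zero hk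
  rw [← Real.exp_log (show (0:ℝ) < ((k:ℝ)/Real.exp 1)^(k:ℕ) by positivity)]
  congr 1
  rw [Real.log_pow, Real.log_div hk0.ne' (Real.exp_ne_zero 1), Real.log_exp]
  ring

lemma gfun_le_factorial (k : ℕ) (hk : k ≠ 0) : gfun (k:ℝ) ≤ (k ! : ℝ) := by
  have h := factorial_stirling_lower k hk
  rwa [pow_div_exp_eq k hk, ← gfun] at h

lemma factorial_le_gfun (k : ℕ) (hk : k ≠ 0) :
    (k ! : ℝ) ≤ gfun (k:ℝ) * Real.exp (1/(12*(k:ℝ))) := by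
  have h := factorial_stirling_upper k hk
  rwa [pow_div_exp_eq k hk, ← gfun] at h

lemma gfun_pos (X : ℝ) (hX : 0 < X) : 0 < gfun X := by
  rw [gfun]
  positivity

lemma bridge (p q r s : ℕ) (hp : p ≠ 0) (hq : q ≠ 0) (hr : r ≠ 0) (hs : s ≠ 0) :
    gfun ((p:ℝ)+q) * gfun ((r:ℝ)+s) * gfun ((p:ℝ)+r) * gfun ((q:ℝ)+s) /
      (gfun p * gfun q * gfun r * gfun s * gfun ((p:ℝ)+q+r+s)
        * Real.exp (1/(12*(p:ℝ)) + 1/(12*(q:ℝ)) + 1/(12*(r:ℝ)) + 1/(12*(s:ℝ))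
            + 1/(12*((p:ℝ)+q+r+s))))
    ≤ ((p+q).choose p * (r+s).choose r : ℝ) / ((p+q+r+s).choose (p+r)) := by
  have hp0 : (0:ℝ) < p := by exact_mod_cast Nat.pos_of_ne_zero hp
  have hq0 : (0:ℝ) < q := by exact_mod_cast Nat.pos_of_ne_zero hq
  have hr0 : (0:ℝ) < r := by exact_mod_cast Nat.pos_of_ne_zero hr
  have hs0 : (0:ℝ) < s := by exact_mod_cast Nat.pos_of_ne_zero hs
  have cpq : ((p+q:ℕ):ℝ) = (p:ℝ)+q := by push_cast; ring
  have crs : ((r+s:ℕ):ℝ) = (r:ℝ)+s := by push_cast; ring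
  have cpr : ((p+r:ℕ):ℝ) = (p:ℝ)+r := by push_cast; ring
  have cqs : ((q+s:ℕ):ℝ) = (q:ℝ)+s := by push_cast; ring
  have cn : ((p+q+r+s:ℕ):ℝ) = (p:ℝ)+q+r+s := by push_cast; ring
  have hnum : gfun ((p:ℝ)+q) * gfun ((r:ℝ)+s) * gfun ((p:ℝ)+r) * gfun ((q:ℝ)+s)
      ≤ ((p+q)! * (r+s)! * (p+r)! * (q+s)! : ℕ) := by
    push_cast
    have b1 := gfun_le_factorial (p+q) (by omega); rw [cpq] at b1
    have b2 := gfun_le_factorial (r+s) (by omega); rw [crs] at b2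
    have b3 := gfun_le_factorial (p+r) (by omega); rw [cpr] at b3
    have b4 := gfun_le_factorial (q+s) (by omega); rw [cqs] at b4
    have g1 := gfun_pos ((p:ℝ)+q) (by linarith)
    have g2 := gfun_pos ((r:ℝ)+s) (by linarith)
    have g3 := gfun_pos ((p:ℝ)+r) (by linarith)
    have g4 := gfun_pos ((q:ℝ)+s) (by linarith)
    have f1 : (0:ℝ) < ((p+q)! : ℕ) := by exact_mod_cast Nat.factorial_pos _
    have f2 : (0:ℝ) < ((r+s)! : ℕ) := by exact_mod_cast Nat.factorial_pos _
    have f3 : (0:ℝ) < ((p+r)! : ℕ) := by exact_mod_cast Nat.factorial_pos _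
    push_cast at b1 b2 b3 b4 f1 f2 f3
    calc gfun ((p:ℝ)+q) * gfun ((r:ℝ)+s) * gfun ((p:ℝ)+r) * gfun ((q:ℝ)+s)
        ≤ ((p+q)! : ℝ) * ((r+s)! : ℝ) * ((p+r)! : ℝ) * ((q+s)! : ℝ) := by
          apply mul_le_mul (mul_le_mul (mul_le_mul b1 b2 g2.le (by linarith)) b3 g3.le
            (by positivity)) b4 g4.le (by positivity)
      _ = _ := by push_cast; ring
  have hden : ((p ! * q ! * r ! * s ! * (p+q+r+s)! : ℕ) : ℝ)
      ≤ gfun p * gfun q * gfun r * gfun s * gfun ((p:ℝ)+q+r+s)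
        * Real.exp (1/(12*(p:ℝ)) + 1/(12*(q:ℝ)) + 1/(12*(r:ℝ)) + 1/(12*(s:ℝ))
            + 1/(12*((p:ℝ)+q+r+s))) := by
    have b1 := factorial_le_gfun p hp
    have b2 := factorial_le_gfun q hq
    have b3 := factorial_le_gfun r hr
    have b4 := factorial_le_gfun s hs
    have b5 := factorial_le_gfun (p+q+r+s) (by omega)
    rw [cn] at b5
    have e5 : (((p+q+r+s : ℕ)):ℝ) = (p:ℝ)+q+r+s := cn
    have key : ((p ! : ℕ):ℝ) * (q ! : ℕ) * (r ! : ℕ) * (s ! : ℕ) * ((p+q+r+s)! : ℕ)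
        ≤ (gfun p * Real.exp (1/(12*(p:ℝ)))) * (gfun q * Real.exp (1/(12*(q:ℝ))))
          * (gfun r * Real.exp (1/(12*(r:ℝ)))) * (gfun s * Real.exp (1/(12*(s:ℝ))))
          * (gfun ((p:ℝ)+q+r+s) * Real.exp (1/(12*((p:ℝ)+q+r+s)))) := by
      have P1 : (0:ℝ) < gfun ↑p * Real.exp (1/(12*(p:ℝ))) :=
        mul_pos (gfun_pos _ hp0) (Real.exp_pos _)
      have P2 : (0:ℝ) < gfun ↑q * Real.exp (1/(12*(q:ℝ))) :=
        mul_pos (gfun_pos _ hq0) (Real.exp_pos _)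
      have P3 : (0:ℝ) < gfun ↑r * Real.exp (1/(12*(r:ℝ))) :=
        mul_pos (gfun_pos _ hr0) (Real.exp_pos _)
      have P4 : (0:ℝ) < gfun ↑s * Real.exp (1/(12*(s:ℝ))) :=
        mul_pos (gfun_pos _ hs0) (Real.exp_pos _)
      have F1 : (0:ℝ) ≤ ((q ! : ℕ):ℝ) := by positivity
      have F2 : (0:ℝ) ≤ ((r ! : ℕ):ℝ) := by positivity
      have F3 : (0:ℝ) ≤ ((s ! : ℕ):ℝ) := by positivity
      have F4 : (0:ℝ) ≤ (((p+q+r+s) ! : ℕ):ℝ) := by positivity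
      exact mul_le_mul (mul_le_mul (mul_le_mul (mul_le_mul b1 b2 F1 P1.le)
        b3 F2 (mul_pos P1 P2).le) b4 F3 (mul_pos (mul_pos P1 P2) P3).le) b5
        F4 (mul_pos (mul_pos (mul_pos P1 P2) P3) P4).le
    calc ((p ! * q ! * r ! * s ! * (p+q+r+s)! : ℕ) : ℝ)
        = ((p ! : ℕ):ℝ) * (q ! : ℕ) * (r ! : ℕ) * (s ! : ℕ) * ((p+q+r+s)! : ℕ) := by
          push_cast; ring
      _ ≤ _ := key
      _ = _ := by rw [Real.exp_add, Real.exp_add, Real.exp_add, Real.exp_add]; ring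
  have hdenpos : (0:ℝ) < ((p ! * q ! * r ! * s ! * (p+q+r+s)! : ℕ) : ℝ) := by
    exact_mod_cast Nat.pos_of_ne_zero (by positivity)
  have step := div_le_div₀ (by positivity) hnum hdenpos hden
  refine step.trans (le_of_eq ?_)
  rw [Nat.cast_choose ℝ (Nat.le_add_right p q), Nat.cast_choose ℝ (Nat.le_add_right r s),
    Nat.cast_choose ℝ (show p+r ≤ p+q+r+s by omega),
    show p+q-p = q from by omega, show r+s-r = s from by omega,
    show p+q+r+s-(p+r) = q+s from by omega]
  push_cast
  have n1 : ((p !:ℕ):ℝ) ≠ 0 := by positivity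
  have n2 : ((q !:ℕ):ℝ) ≠ 0 := by positivity
  have n3 : ((r !:ℕ):ℝ) ≠ 0 := by positivity
  have n4 : ((s !:ℕ):ℝ) ≠ 0 := by positivity
  have n5 : (((p+q)!:ℕ):ℝ) ≠ 0 := by positivity
  have n6 : (((r+s)!:ℕ):ℝ) ≠ 0 := by positivity
  have n7 : (((p+r)!:ℕ):ℝ) ≠ 0 := by positivity
  have n8 : (((q+s)!:ℕ):ℝ) ≠ 0 := by positivity
  have n9 : (((p+q+r+s)!:ℕ):ℝ) ≠ 0 := by positivity
  field_simp

/-- Pointwise lower bound for the hypergeometric distribution: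
`Pr[X = ℓ] = C(K,ℓ)·C(N-K,M-ℓ)/C(N,M) ≥ √(π/32)·√((1-x)/(M a (1-a)))·e^{-F}`. -/
theorem hypergeometric_pointwise_lower_bound (N K M ℓ : ℕ)
    (hℓM : ℓ ≤ M) (hℓK : ℓ < K) (hMN : M - ℓ < N - K)
    (hℓ0 : 0 < ℓ) (hℓM' : ℓ < M) (hK0 : 0 < K) (hKN : K < N) :
    Real.sqrt (Real.pi / 32)
      * Real.sqrt ((1 - (M:ℝ)/N) / (M * ((ℓ:ℝ)/M) * (1 - (ℓ:ℝ)/M)))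
      * Real.exp (-((((ℓ:ℝ)/M) * Real.log (((ℓ:ℝ)/M) / ((K:ℝ)/N))
            + (1 - (ℓ:ℝ)/M) * Real.log ((1 - (ℓ:ℝ)/M) / (1 - (K:ℝ)/N))
          + ((M:ℝ)/N) / (1 - (M:ℝ)/N)
            * ((ℓ:ℝ)/M - (K:ℝ)/N)^2
            / (2 * ((K:ℝ)/N - ((ℓ:ℝ)/M) * ((M:ℝ)/N))
                * ((1 - (K:ℝ)/N) - (1 - (ℓ:ℝ)/M) * ((M:ℝ)/N)))) * M))
    ≤ (K.choose ℓ * (N - K).choose (M - ℓ) : ℝ) / (N.choose M) := by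
  obtain ⟨q, hq1, rfl⟩ : ∃ q, 1 ≤ q ∧ K = ℓ + q := ⟨K - ℓ, by omega, by omega⟩
  obtain ⟨r, hr1, rfl⟩ : ∃ r, 1 ≤ r ∧ M = ℓ + r := ⟨M - ℓ, by omega, by omega⟩
  obtain ⟨s, hs1, rfl⟩ : ∃ s, 1 ≤ s ∧ N = ℓ + q + r + s :=
    ⟨N - (ℓ + q) - r, by omega, by omega⟩
  rw [show ℓ + q + r + s - (ℓ + q) = r + s from by omega,
      show ℓ + r - ℓ = r from by omega]
  push_cast
  have c1 : (1:ℝ) ≤ (ℓ:ℝ) := by exact_mod_cast hℓ0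
  have c2 : (1:ℝ) ≤ (q:ℝ) := by exact_mod_cast hq1
  have c3 : (1:ℝ) ≤ (r:ℝ) := by exact_mod_cast hr1
  have c4 : (1:ℝ) ≤ (s:ℝ) := by exact_mod_cast hs1
  exact (coreIneq (ℓ:ℝ) (q:ℝ) (r:ℝ) (s:ℝ) c1 c2 c3 c4).trans
    (bridge ℓ q r s (by omega) (by omega) (by omega) (by omega))
end

section
/- Fix a, b ∈ (0,1) and let C = min(b/a, (1-b)/(1-a)). Define Q(x) = -x·a·ln(a/b) - x·(1-a)·ln((1-a)/(1-b)) + (1-x)·ln(1-x) - b·(1 - (a/b)x)·ln(1 - (a/b)x) - (1-b)·(1 - ((1-a)/(1-b))x)·ln(1 - ((1-a)/(1-b))x), for x < C. Then Q(0) = 0, Q'(0) = -D(a ‖ b), and Q''(x) = -(a-b)² / ((1-x)·((1-b) - (1-a)x)·(b - a·x)). -/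
private lemma aux_g (k x : ℝ) (h : (1:ℝ) - k*x ≠ 0) :
    HasDerivAt (fun y => (1 - k*y) * Real.log (1 - k*y))
      (-k * (Real.log (1 - k*x) + 1)) x := by
  have h1 : HasDerivAt (fun y : ℝ => 1 - k*y) (-k) x := by
    simpa using ((hasDerivAt_id x).const_mul k).const_sub 1
  have h2 : HasDerivAt (fun y : ℝ => Real.log (1 - k*y)) ((1 - k*x)⁻¹ * (-k)) x :=
    (Real.hasDerivAt_log h).comp (h := fun y => 1 - k*y) x h1
  have h3 := h1.mul h2
  refine h3.congr_deriv ?_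
  field_simp
  ring

/-- Properties of the auxiliary function `Q`: `Q(0) = 0`, `Q'(0) = -D(a‖b)`, and the
second derivative formula for all `x < min(b/a, (1-b)/(1-a))`. -/
theorem Q_deriv_properties (a b : ℝ) (ha : a ∈ Set.Ioo (0:ℝ) 1) (hb : b ∈ Set.Ioo (0:ℝ) 1)
    (Q : ℝ → ℝ)
    (hQ : ∀ x : ℝ, Q x =
      -x * a * Real.log (a/b) - x * (1-a) * Real.log ((1-a)/(1-b))
      + (1-x) * Real.log (1-x)
      - b * (1 - (a/b) * x) * Real.log (1 - (a/b) * x)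
      - (1-b) * (1 - ((1-a)/(1-b)) * x) * Real.log (1 - ((1-a)/(1-b)) * x)) :
    Q 0 = 0
    ∧ deriv Q 0 = -(a * Real.log (a/b) + (1-a) * Real.log ((1-a)/(1-b)))
    ∧ ∀ x < min (b/a) ((1-b)/(1-a)),
        deriv (deriv Q) x = -(a-b)^2 / ((1-x) * ((1-b) - (1-a)*x) * (b - a*x)) := by
  obtain ⟨ha0, ha1⟩ := ha
  obtain ⟨hb0, hb1⟩ := hb
  have hb0' : b ≠ 0 := ne_of_gt hb0
  have hb1' : (1:ℝ) - b ≠ 0 := by linarith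
  set C : ℝ := min (b/a) ((1-b)/(1-a)) with hCdef
  have hC0 : 0 < C := lt_min (div_pos hb0 ha0) (div_pos (by linarith) (by linarith))
  have hCle : C ≤ 1 := by
    rcases le_total a b with h | h
    · exact min_le_of_right_le (by rw [div_le_one (by linarith)]; linarith)
    · exact min_le_of_left_le (by rw [div_le_one ha0]; linarith)
  -- positivity/nonvanishing facts for x < C
  have hfacts : ∀ x, x < C → 0 < 1 - x ∧ 0 < b - a*x ∧ 0 < (1-b) - (1-a)*x := by
    intro x hx
    have hx1 : x < 1 := lt_of_lt_of_le hx hCle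
    have hx2 : x < b/a := lt_of_lt_of_le hx (min_le_left _ _)
    have hx3 : x < (1-b)/(1-a) := lt_of_lt_of_le hx (min_le_right _ _)
    refine ⟨by linarith, ?_, ?_⟩
    · have := (lt_div_iff₀ ha0).mp hx2; linarith [this]
    · have := (lt_div_iff₀ (by linarith : (0:ℝ) < 1-a)).mp hx3; linarith [this]
  have hne1 : ∀ x, x < C → (1:ℝ) - x ≠ 0 := fun x hx => ne_of_gt (hfacts x hx).1
  have hne2 : ∀ x, x < C → (1:ℝ) - (a/b)*x ≠ 0 := by
    intro x hx
    have h := (hfacts x hx).2.1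
    have : (1:ℝ) - (a/b)*x = (b - a*x)/b := by field_simp
    rw [this]
    exact ne_of_gt (div_pos h hb0)
  have hne3 : ∀ x, x < C → (1:ℝ) - ((1-a)/(1-b))*x ≠ 0 := by
    intro x hx
    have h := (hfacts x hx).2.2
    have : (1:ℝ) - ((1-a)/(1-b))*x = ((1-b) - (1-a)*x)/(1-b) := by field_simp
    rw [this]
    exact ne_of_gt (div_pos h (by linarith))
  -- the first derivative function
  set Q1 : ℝ → ℝ := fun x =>
    -(a * Real.log (a/b)) - (1-a) * Real.log ((1-a)/(1-b))
    - Real.log (1-x) + a * Real.log (1 - (a/b)*x)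
    + (1-a) * Real.log (1 - ((1-a)/(1-b))*x) with hQ1def
  have hQfun : Q = fun x =>
      -x * a * Real.log (a/b) - x * (1-a) * Real.log ((1-a)/(1-b))
      + (1-x) * Real.log (1-x)
      - b * ((1 - (a/b) * x) * Real.log (1 - (a/b) * x))
      - (1-b) * ((1 - ((1-a)/(1-b)) * x) * Real.log (1 - ((1-a)/(1-b)) * x)) := by
    funext x; rw [hQ x]; ring
  have hD1 : ∀ x, x < C → HasDerivAt Q (Q1 x) x := by
    intro x hx
    rw [hQfun]
    have t1 : HasDerivAt (fun y : ℝ => -y * a * Real.log (a/b))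
        (-1 * a * Real.log (a/b)) x :=
      (((hasDerivAt_id x).neg.mul_const a).mul_const (Real.log (a/b)))
    have t2 : HasDerivAt (fun y : ℝ => y * (1-a) * Real.log ((1-a)/(1-b)))
        (1 * (1-a) * Real.log ((1-a)/(1-b))) x :=
      (((hasDerivAt_id x).mul_const (1-a)).mul_const (Real.log ((1-a)/(1-b))))
    have t3 : HasDerivAt (fun y : ℝ => (1-y) * Real.log (1-y))
        (-1 * (Real.log (1 - 1*x) + 1)) x := by
      have := aux_g 1 x (by simpa using hne1 x hx)
      simpa using this
    have t4 : HasDerivAt (fun y : ℝ => b * ((1 - (a/b)*y) * Real.log (1 - (a/b)*y)))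
        (b * (-(a/b) * (Real.log (1 - (a/b)*x) + 1))) x :=
      (aux_g (a/b) x (hne2 x hx)).const_mul b
    have t5 : HasDerivAt
        (fun y : ℝ => (1-b) * ((1 - ((1-a)/(1-b))*y) * Real.log (1 - ((1-a)/(1-b))*y)))
        ((1-b) * (-((1-a)/(1-b)) * (Real.log (1 - ((1-a)/(1-b))*x) + 1))) x :=
      (aux_g ((1-a)/(1-b)) x (hne3 x hx)).const_mul (1-b)
    have hd := (((t1.sub t2).add t3).sub t4).sub t5
    refine hd.congr_deriv ?_
    rw [hQ1def]
    simp only [one_mul]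
    field_simp
    ring
  -- the second derivative value
  have hD2 : ∀ x, x < C → HasDerivAt Q1
      ((1-x)⁻¹ - a * ((a/b) / (1 - (a/b)*x))
        - (1-a) * (((1-a)/(1-b)) / (1 - ((1-a)/(1-b))*x))) x := by
    intro x hx
    have h1 : HasDerivAt (fun y : ℝ => 1 - y) (-1) x := by
      simpa using (hasDerivAt_id x).const_sub 1
    have s1 : HasDerivAt (fun y : ℝ => Real.log (1-y)) ((1-x)⁻¹ * (-1)) x :=
      (Real.hasDerivAt_log (hne1 x hx)).comp (h := fun y => 1 - y) x h1
    have h2 : HasDerivAt (fun y : ℝ => 1 - (a/b)*y) (-(a/b)) x := by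
      simpa using ((hasDerivAt_id x).const_mul (a/b)).const_sub 1
    have s2 : HasDerivAt (fun y : ℝ => Real.log (1 - (a/b)*y))
        ((1 - (a/b)*x)⁻¹ * (-(a/b))) x :=
      (Real.hasDerivAt_log (hne2 x hx)).comp (h := fun y => 1 - (a/b)*y) x h2
    have h3 : HasDerivAt (fun y : ℝ => 1 - ((1-a)/(1-b))*y) (-((1-a)/(1-b))) x := by
      simpa using ((hasDerivAt_id x).const_mul ((1-a)/(1-b))).const_sub 1
    have s3 : HasDerivAt (fun y : ℝ => Real.log (1 - ((1-a)/(1-b))*y))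
        ((1 - ((1-a)/(1-b))*x)⁻¹ * (-((1-a)/(1-b)))) x :=
      (Real.hasDerivAt_log (hne3 x hx)).comp (h := fun y => 1 - ((1-a)/(1-b))*y) x h3
    have hd := ((((hasDerivAt_const x
        (-(a * Real.log (a/b)) - (1-a) * Real.log ((1-a)/(1-b)))).sub s1).add
        (s2.const_mul a)).add (s3.const_mul (1-a)))
    refine hd.congr_deriv ?_
    have f2 : b - a*x ≠ 0 := ne_of_gt (hfacts x hx).2.1
    have f3 : (1-b) - (1-a)*x ≠ 0 := ne_of_gt (hfacts x hx).2.2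
    have e2 : (1:ℝ) - (a/b)*x = (b - a*x)/b := by field_simp
    have e3 : (1:ℝ) - ((1-a)/(1-b))*x = ((1-b) - (1-a)*x)/(1-b) := by field_simp
    rw [e2, e3]
    field_simp
    ring
  refine ⟨?_, ?_, ?_⟩
  · rw [hQ 0]; simp
  · have := (hD1 0 hC0).deriv
    rw [this, hQ1def]
    simp [Real.log_one]
    ring
  · intro x hx
    have hev : deriv Q =ᶠ[nhds x] Q1 := by
      filter_upwards [Iio_mem_nhds hx] with y hy
      exact (hD1 y hy).deriv
    rw [hev.deriv_eq, (hD2 x hx).deriv]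
    have f1 := (hfacts x hx).1
    have f2 := (hfacts x hx).2.1
    have f3 := (hfacts x hx).2.2
    have e2 : (1:ℝ) - (a/b)*x = (b - a*x)/b := by field_simp
    have e3 : (1:ℝ) - ((1-a)/(1-b))*x = ((1-b) - (1-a)*x)/(1-b) := by field_simp
    rw [e2, e3]
    have g2 : b - x*a ≠ 0 := by rw [mul_comm]; exact f2.ne'
    have g3 : 1 - b - x*(1-a) ≠ 0 := by rw [mul_comm]; exact f3.ne'
    field_simp
    ring
end

section
/- Fix a, b ∈ (0,1) and let Q be as above, defined for x < min(b/a, (1-b)/(1-a)). For any x ∈ (0, min(b/a, (1-b)/(1-a))) one has Q(x) ≥ -D(a ‖ b)·x - ((a-b)² / ((1-x)·(b - a·x)·((1-b) - (1-a)·x)))·(x²/2). -/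
private lemma hd_affine_log (c k t : ℝ) (h : 1 - k*t ≠ 0) :
    HasDerivAt (fun y : ℝ => c * (1 - k*y) * Real.log (1 - k*y))
      (-(c*k) * (Real.log (1 - k*t) + 1)) t := by
  have h1 : HasDerivAt (fun y : ℝ => 1 - k*y) (-k) t := by
    simpa using ((hasDerivAt_id t).const_mul k).const_sub 1
  have h3 := (h1.const_mul c).mul (h1.log h)
  refine h3.congr_deriv ?_
  field_simp
  ring

private lemma hd_one_sub_log (t : ℝ) (h : 1 - t ≠ 0) :
    HasDerivAt (fun y : ℝ => (1-y) * Real.log (1-y))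
      (-(Real.log (1-t) + 1)) t := by
  have h1 : HasDerivAt (fun y : ℝ => 1 - y) (-1 : ℝ) t := by
    simpa using (hasDerivAt_id t).const_sub 1
  have h3 := h1.mul (h1.log h)
  refine h3.congr_deriv ?_
  field_simp
  ring

/-- Second-order tangent lower bound for `Q` on `(0, min(b/a, (1-b)/(1-a)))`:
`Q(x) ≥ -D(a‖b)·x - ((a-b)²/((1-x)(b-ax)((1-b)-(1-a)x)))·x²/2`. -/
theorem Q_second_order_lower_bound (a b : ℝ)
    (ha : a ∈ Set.Ioo (0:ℝ) 1) (hb : b ∈ Set.Ioo (0:ℝ) 1)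
    (Q : ℝ → ℝ)
    (hQ : ∀ x : ℝ, Q x =
      -x * a * Real.log (a/b) - x * (1-a) * Real.log ((1-a)/(1-b))
      + (1-x) * Real.log (1-x)
      - b * (1 - (a/b) * x) * Real.log (1 - (a/b) * x)
      - (1-b) * (1 - ((1-a)/(1-b)) * x) * Real.log (1 - ((1-a)/(1-b)) * x))
    (x : ℝ) (hx : x ∈ Set.Ioo 0 (min (b/a) ((1-b)/(1-a)))) :
    -(a * Real.log (a/b) + (1-a) * Real.log ((1-a)/(1-b))) * x
      - ((a-b)^2 / ((1-x) * (b - a*x) * ((1-b) - (1-a)*x))) * (x^2/2)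
    ≤ Q x := by
  obtain ⟨ha0, ha1⟩ := ha
  obtain ⟨hb0, hb1⟩ := hb
  obtain ⟨hx0, hxm⟩ := hx
  have ha1' : (0:ℝ) < 1 - a := by linarith
  have hb1' : (0:ℝ) < 1 - b := by linarith
  have hxa : x < b/a := lt_of_lt_of_le hxm (min_le_left _ _)
  have hxb : x < (1-b)/(1-a) := lt_of_lt_of_le hxm (min_le_right _ _)
  have hax : x * a < b := (lt_div_iff₀ ha0).mp hxa
  have hbx : x * (1-a) < 1-b := (lt_div_iff₀ ha1').mp hxb
  have hx1 : x < 1 := by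
    rcases le_or_gt a b with h | h
    · calc x < (1-b)/(1-a) := hxb
        _ ≤ 1 := by rw [div_le_one ha1']; linarith
    · calc x < b/a := hxa
        _ ≤ 1 := by rw [div_le_one ha0]; linarith
  -- basic positivity on [0, x]
  have key : ∀ y ∈ Set.Icc (0:ℝ) x,
      0 < 1 - y ∧ 0 < b - a*y ∧ 0 < (1-b) - (1-a)*y := by
    rintro y ⟨hy0, hyx⟩
    refine ⟨by linarith, ?_, ?_⟩
    · nlinarith [mul_le_mul_of_nonneg_left hyx ha0.le]
    · nlinarith [mul_le_mul_of_nonneg_left hyx ha1'.le]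
  set D : ℝ := a * Real.log (a/b) + (1-a) * Real.log ((1-a)/(1-b)) with hD
  set C : ℝ := -(a-b)^2 / ((1-x) * (b - a*x) * ((1-b) - (1-a)*x)) with hC
  set Q1 : ℝ → ℝ := fun y => -D - Real.log (1-y) + a * Real.log (1 - a/b * y)
      + (1-a) * Real.log (1 - (1-a)/(1-b) * y) with hQ1
  set Q2 : ℝ → ℝ := fun y => 1/(1-y) - a^2/(b - a*y) - (1-a)^2/((1-b) - (1-a)*y) with hQ2
  have hQfun : Q = fun z : ℝ =>
      -z * a * Real.log (a/b) - z * (1-a) * Real.log ((1-a)/(1-b))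
      + (1-z) * Real.log (1-z)
      - b * (1 - (a/b) * z) * Real.log (1 - (a/b) * z)
      - (1-b) * (1 - ((1-a)/(1-b)) * z) * Real.log (1 - ((1-a)/(1-b)) * z) :=
    funext hQ
  -- positivity of log arguments
  have e1pos : ∀ y ∈ Set.Icc (0:ℝ) x, 0 < 1 - a/b * y := by
    intro y hy
    obtain ⟨h1, h2, h3⟩ := key y hy
    have : 1 - a/b * y = (b - a*y)/b := by field_simp
    rw [this]; positivity
  have e2pos : ∀ y ∈ Set.Icc (0:ℝ) x, 0 < 1 - (1-a)/(1-b) * y := by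
    intro y hy
    obtain ⟨h1, h2, h3⟩ := key y hy
    have : 1 - (1-a)/(1-b) * y = ((1-b) - (1-a)*y)/(1-b) := by field_simp
    rw [this]; positivity
  -- derivative of Q
  have hder1 : ∀ y ∈ Set.Icc (0:ℝ) x, HasDerivAt Q (Q1 y) y := by
    intro y hy
    obtain ⟨h1, h2, h3⟩ := key y hy
    have e1 := e1pos y hy
    have e2 := e2pos y hy
    rw [hQfun]
    have t1 : HasDerivAt (fun z : ℝ => -z * a * Real.log (a/b)
        - z * (1-a) * Real.log ((1-a)/(1-b))) (-D) y := by
      have heq : (fun z : ℝ => -z * a * Real.log (a/b) - z * (1-a) * Real.log ((1-a)/(1-b)))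
          = fun z : ℝ => z * (-(a * Real.log (a/b)) - (1-a) * Real.log ((1-a)/(1-b))) := by
        funext z; ring
      rw [heq]
      have := hasDerivAt_mul_const (x := y)
        (-(a * Real.log (a/b)) - (1-a) * Real.log ((1-a)/(1-b)))
      refine this.congr_deriv ?_
      rw [hD]; ring
    have t3 := hd_one_sub_log y h1.ne'
    have t4 := hd_affine_log b (a/b) y e1.ne'
    have t5 := hd_affine_log (1-b) ((1-a)/(1-b)) y e2.ne'
    have comb := ((t1.add t3).sub t4).sub t5
    refine comb.congr_deriv ?_
    rw [hQ1, hD]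
    have hb' : b ≠ 0 := hb0.ne'
    have hb1'' : (1:ℝ) - b ≠ 0 := hb1'.ne'
    field_simp
    ring
  -- derivative of Q1
  have hder2 : ∀ y ∈ Set.Icc (0:ℝ) x, HasDerivAt Q1 (Q2 y) y := by
    intro y hy
    obtain ⟨h1, h2, h3⟩ := key y hy
    have e1 := e1pos y hy
    have e2 := e2pos y hy
    have l1 : HasDerivAt (fun z : ℝ => Real.log (1-z)) (-1/(1-y)) y := by
      have hlin : HasDerivAt (fun z : ℝ => 1 - z) (-1 : ℝ) y := by
        simpa using (hasDerivAt_id y).const_sub 1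
      simpa using hlin.log h1.ne'
    have l2 : HasDerivAt (fun z : ℝ => Real.log (1 - a/b * z)) (-(a/b)/(1 - a/b * y)) y := by
      have hlin : HasDerivAt (fun z : ℝ => 1 - a/b * z) (-(a/b)) y := by
        simpa using ((hasDerivAt_id y).const_mul (a/b)).const_sub 1
      simpa using hlin.log e1.ne'
    have l3 : HasDerivAt (fun z : ℝ => Real.log (1 - (1-a)/(1-b) * z))
        (-((1-a)/(1-b))/(1 - (1-a)/(1-b) * y)) y := by
      have hlin : HasDerivAt (fun z : ℝ => 1 - (1-a)/(1-b) * z) (-((1-a)/(1-b))) y := by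
        simpa using ((hasDerivAt_id y).const_mul ((1-a)/(1-b))).const_sub 1
      simpa using hlin.log e2.ne'
    have comb := (((hasDerivAt_const y (-D)).sub l1).add (l2.const_mul a)).add (l3.const_mul (1-a))
    refine comb.congr_deriv ?_
    rw [hQ2]
    field_simp
    ring
  -- algebraic identity for Q2
  have hQ2eq : ∀ y ∈ Set.Icc (0:ℝ) x,
      Q2 y = -(a-b)^2 / ((1-y) * (b - a*y) * ((1-b) - (1-a)*y)) := by
    intro y hy
    obtain ⟨h1, h2, h3⟩ := key y hy
    rw [hQ2]
    beta_reduce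
    rw [div_sub_div _ _ h1.ne' h2.ne', div_sub_div _ _ (mul_ne_zero h1.ne' h2.ne') h3.ne']
    ring
  have hPx : 0 < (1-x) * (b - a*x) * ((1-b) - (1-a)*x) := by
    obtain ⟨h1, h2, h3⟩ := key x ⟨hx0.le, le_refl x⟩
    positivity
  -- Q2 y ≥ C on [0,x]
  have hQ2ge : ∀ y ∈ Set.Icc (0:ℝ) x, C ≤ Q2 y := by
    intro y hy
    obtain ⟨h1, h2, h3⟩ := key y hy
    obtain ⟨hy0, hyx⟩ := hy
    rw [hQ2eq y ⟨hy0, hyx⟩, hC]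
    have hPle : (1-x) * (b - a*x) * ((1-b) - (1-a)*x)
        ≤ (1-y) * (b - a*y) * ((1-b) - (1-a)*y) := by
      obtain ⟨g1, g2, g3⟩ := key x ⟨hx0.le, le_refl x⟩
      have f1 : 1 - x ≤ 1 - y := by linarith
      have f2 : b - a*x ≤ b - a*y := by nlinarith [mul_le_mul_of_nonneg_left hyx ha0.le]
      have f3 : (1-b) - (1-a)*x ≤ (1-b) - (1-a)*y := by
        nlinarith [mul_le_mul_of_nonneg_left hyx ha1'.le]
      have := mul_le_mul (mul_le_mul f1 f2 g2.le h1.le) f3 g3.le (by positivity)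
      exact this
    have hs : (0:ℝ) ≤ (a-b)^2 := sq_nonneg _
    have := div_le_div_of_nonneg_left hs hPx hPle
    -- this : (a-b)^2 / ((1-y)...) ≤ (a-b)^2 / ((1-x)...)
    have e1 : -(a-b)^2 / ((1-x) * (b - a*x) * ((1-b) - (1-a)*x))
        = -((a-b)^2 / ((1-x) * (b - a*x) * ((1-b) - (1-a)*x))) := by ring
    have e2 : -(a-b)^2 / ((1-y) * (b - a*y) * ((1-b) - (1-a)*y))
        = -((a-b)^2 / ((1-y) * (b - a*y) * ((1-b) - (1-a)*y))) := by ring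
    rw [e1, e2]
    linarith
  -- the comparison functions
  set g : ℝ → ℝ := fun y => Q y + D*y - C*y^2/2 with hg
  set g1 : ℝ → ℝ := fun y => Q1 y + D - C*y with hg1
  have hgder : ∀ y ∈ Set.Icc (0:ℝ) x, HasDerivAt g (g1 y) y := by
    intro y hy
    have d1 : HasDerivAt (fun z : ℝ => D*z) D y := by
      simpa using (hasDerivAt_id y).const_mul D
    have d2 : HasDerivAt (fun z : ℝ => C*z^2/2) (C*y) y := by
      have := ((hasDerivAt_pow 2 y).const_mul C).div_const 2
      refine this.congr_deriv ?_
      ring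
    have := ((hder1 y hy).add d1).sub d2
    exact this
  have hg1der : ∀ y ∈ Set.Icc (0:ℝ) x, HasDerivAt g1 (Q2 y - C) y := by
    intro y hy
    have d1 : HasDerivAt (fun z : ℝ => C*z) C y := by
      simpa using (hasDerivAt_id y).const_mul C
    have := ((hder2 y hy).add_const D).sub d1
    exact this
  -- g1 is monotone on [0,x]
  have hg1mono : MonotoneOn g1 (Set.Icc 0 x) := by
    apply monotoneOn_of_deriv_nonneg (convex_Icc 0 x)
    · exact fun y hy => (hg1der y hy).continuousAt.continuousWithinAt
    · intro y hy
      rw [interior_Icc] at hy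
      exact (hg1der y ⟨hy.1.le, hy.2.le⟩).differentiableAt.differentiableWithinAt
    · intro y hy
      rw [interior_Icc] at hy
      rw [(hg1der y ⟨hy.1.le, hy.2.le⟩).deriv]
      have := hQ2ge y ⟨hy.1.le, hy.2.le⟩
      linarith
  have hg10 : g1 0 = 0 := by
    rw [hg1, hQ1]
    simp
  have hg1nonneg : ∀ y ∈ Set.Icc (0:ℝ) x, 0 ≤ g1 y := by
    intro y hy
    have := hg1mono (Set.left_mem_Icc.mpr hx0.le) hy hy.1
    rw [hg10] at this
    exact this
  -- g is monotone on [0,x]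
  have hgmono : MonotoneOn g (Set.Icc 0 x) := by
    apply monotoneOn_of_deriv_nonneg (convex_Icc 0 x)
    · exact fun y hy => (hgder y hy).continuousAt.continuousWithinAt
    · intro y hy
      rw [interior_Icc] at hy
      exact (hgder y ⟨hy.1.le, hy.2.le⟩).differentiableAt.differentiableWithinAt
    · intro y hy
      rw [interior_Icc] at hy
      rw [(hgder y ⟨hy.1.le, hy.2.le⟩).deriv]
      exact hg1nonneg y ⟨hy.1.le, hy.2.le⟩
  have hg0 : g 0 = 0 := by
    rw [hg]
    simp only
    rw [hQ 0]
    simp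
  have hfin := hgmono (Set.left_mem_Icc.mpr hx0.le) (Set.right_mem_Icc.mpr hx0.le) hx0.le
  rw [hg0] at hfin
  -- hfin : 0 ≤ g x = Q x + D*x - C*x^2/2
  rw [hg] at hfin
  simp only at hfin
  have hCx : C * x^2/2 = -((a-b)^2 / ((1-x) * (b - a*x) * ((1-b) - (1-a)*x)) * (x^2/2)) := by
    rw [hC]; ring
  rw [hD] at hfin ⊢
  linarith [hfin, hCx.le, hCx.ge]
end

section
/- Let X ~ Hypergeometric(N, K, M), let 0 < ℓ < M be an integer, and put a = ℓ/M, b = K/N, x = M/N. If a ≤ 2b, (1-a) ≤ 2(1-b), and x ≤ 1/4, then Pr[X = ℓ] ≥ √(π/(64·M·a·(1-a))) · e^{-3·(a-b)²·M/(b·(1-b))}. -/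
open Real

lemma hyplb_stirling_ge_sqrt_pi (n : ℕ) (hn : 1 ≤ n) : Real.sqrt π ≤ Stirling.stirlingSeq n := by
  obtain ⟨m, rfl⟩ := Nat.exists_eq_add_of_le hn
  have h := Stirling.stirlingSeq'_antitone
  have ht : Filter.Tendsto (Stirling.stirlingSeq ∘ Nat.succ) Filter.atTop (nhds (Real.sqrt π)) :=
    Stirling.tendsto_stirlingSeq_sqrt_pi.comp (Filter.tendsto_add_atTop_nat 1)
  have := h.le_of_tendsto ht m
  simpa [Nat.succ_eq_add_one, Nat.add_comm] using this

lemma hyplb_stirling_le (n : ℕ) (hn : 1 ≤ n) : Stirling.stirlingSeq n ≤ exp 1 / Real.sqrt 2 := by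
  obtain ⟨m, rfl⟩ := Nat.exists_eq_add_of_le hn
  have h := Stirling.stirlingSeq'_antitone (Nat.zero_le m)
  simpa [Stirling.stirlingSeq_one, Nat.succ_eq_add_one, Nat.add_comm] using h

lemma hyplb_factorial_lower (n : ℕ) (hn : 1 ≤ n) :
    Real.sqrt π * (Real.sqrt (2*n) * ((n:ℝ)/exp 1)^n) ≤ n.factorial := by
  have hd : 0 < Real.sqrt (2*n) * ((n:ℝ)/exp 1)^n := by
    have : (0:ℝ) < n := by exact_mod_cast hn
    positivity
  have h := hyplb_stirling_ge_sqrt_pi n hn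
  rw [Stirling.stirlingSeq, le_div_iff₀ hd] at h
  linarith

lemma hyplb_factorial_upper (n : ℕ) (hn : 1 ≤ n) :
    (n.factorial : ℝ) ≤ (exp 1 / Real.sqrt 2) * (Real.sqrt (2*n) * ((n:ℝ)/exp 1)^n) := by
  have hd : 0 < Real.sqrt (2*n) * ((n:ℝ)/exp 1)^n := by
    have : (0:ℝ) < n := by exact_mod_cast hn
    positivity
  have h := hyplb_stirling_le n hn
  rw [Stirling.stirlingSeq, div_le_iff₀ hd] at h
  linarith

lemma hyplb_factorial_lower' (n : ℕ) (hn : 1 ≤ n) :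
    Real.sqrt π * (Real.sqrt (2*n) * (n:ℝ)^n) ≤ n.factorial * exp 1 ^ n := by
  have h := hyplb_factorial_lower n hn
  have he : (0:ℝ) < exp 1 ^ n := by positivity
  rw [div_pow] at h
  have := mul_le_mul_of_nonneg_right h he.le
  calc Real.sqrt π * (Real.sqrt (2*n) * (n:ℝ)^n)
      = Real.sqrt π * (Real.sqrt (2*n) * ((n:ℝ)^n / exp 1 ^ n)) * exp 1 ^ n := by
        field_simp
    _ ≤ n.factorial * exp 1 ^ n := this

lemma hyplb_factorial_upper' (n : ℕ) (hn : 1 ≤ n) :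
    (n.factorial : ℝ) * exp 1 ^ n ≤ (exp 1 / Real.sqrt 2) * (Real.sqrt (2*n) * (n:ℝ)^n) := by
  have h := hyplb_factorial_upper n hn
  have he : (0:ℝ) < exp 1 ^ n := by positivity
  rw [div_pow] at h
  have := mul_le_mul_of_nonneg_right h he.le
  calc (n.factorial : ℝ) * exp 1 ^ n
      ≤ (exp 1 / Real.sqrt 2) * (Real.sqrt (2*n) * ((n:ℝ)^n / exp 1 ^ n)) * exp 1 ^ n := this
    _ = (exp 1 / Real.sqrt 2) * (Real.sqrt (2*n) * (n:ℝ)^n) := by field_simp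

lemma hyplb_exp_le_G (n k m l : ℝ) (hl : 0 < l) (hlk : l < k) (hlm : l < m) (hkn : k < n)
    (hmn : 4*m ≤ n) (hj : 0 < n-k-m+l) :
    exp (-3 * (l/m - k/n)^2 * m / ((k/n)*(1-k/n))) ≤
      (k ^ k * (n-k) ^ (n-k) * m ^ m * (n-m) ^ (n-m)) /
        (l ^ l * (k-l) ^ (k-l) * (m-l) ^ (m-l) * (n-k-m+l) ^ (n-k-m+l) * n ^ n) := by
  have hm : 0 < m := hl.trans hlm
  have hk : 0 < k := hl.trans hlk
  have hn : 0 < n := hk.trans hkn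
  have hnk : 0 < n - k := by linarith
  have hnm : 0 < n - m := by linarith
  have hml : 0 < m - l := by linarith
  have hkl : 0 < k - l := by linarith
  have h1b : 0 < 1 - k/n := by rw [sub_pos]; exact (div_lt_one hn).mpr hkn
  have hbn : 0 < k/n := by positivity
  have hG : (0:ℝ) < (k ^ k * (n-k) ^ (n-k) * m ^ m * (n-m) ^ (n-m)) /
        (l ^ l * (k-l) ^ (k-l) * (m-l) ^ (m-l) * (n-k-m+l) ^ (n-k-m+l) * n ^ n) := by
    have := rpow_pos_of_pos hk k
    positivity
  rw [← Real.exp_log hG, Real.exp_le_exp]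
  have hlog : Real.log ((k ^ k * (n-k) ^ (n-k) * m ^ m * (n-m) ^ (n-m)) /
        (l ^ l * (k-l) ^ (k-l) * (m-l) ^ (m-l) * (n-k-m+l) ^ (n-k-m+l) * n ^ n)) =
      k*log k + (n-k)*log (n-k) + m*log m + (n-m)*log (n-m)
        - (l*log l + (k-l)*log (k-l) + (m-l)*log (m-l) + (n-k-m+l)*log (n-k-m+l) + n*log n) := by
    rw [Real.log_div (by positivity) (by positivity),
      Real.log_mul (by positivity) (by positivity), Real.log_mul (by positivity) (by positivity),
      Real.log_mul (by positivity) (by positivity), Real.log_mul (by positivity) (by positivity),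
      Real.log_mul (by positivity) (by positivity), Real.log_mul (by positivity) (by positivity),
      Real.log_mul (by positivity) (by positivity),
      Real.log_rpow hk, Real.log_rpow hnk, Real.log_rpow hm, Real.log_rpow hnm,
      Real.log_rpow hl, Real.log_rpow hkl, Real.log_rpow hml, Real.log_rpow hj,
      Real.log_rpow hn]
  rw [hlog]
  have hrw : l * log (l*n/(m*k)) + (m-l) * log ((m-l)*n/(m*(n-k)))
      + (k-l) * log ((k-l)*n/((n-m)*k)) + (n-k-m+l) * log ((n-k-m+l)*n/((n-m)*(n-k)))
      = (l*log l + (k-l)*log (k-l) + (m-l)*log (m-l) + (n-k-m+l)*log (n-k-m+l) + n*log n)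
        - (k*log k + (n-k)*log (n-k) + m*log m + (n-m)*log (n-m)) := by
    rw [Real.log_div (by positivity) (by positivity), Real.log_div (by positivity) (by positivity),
      Real.log_div (by positivity) (by positivity), Real.log_div (by positivity) (by positivity),
      Real.log_mul (by positivity) (by positivity), Real.log_mul (by positivity) (by positivity),
      Real.log_mul (by positivity) (by positivity), Real.log_mul (by positivity) (by positivity),
      Real.log_mul (by positivity) (by positivity), Real.log_mul (by positivity) (by positivity),
      Real.log_mul (by positivity) (by positivity), Real.log_mul (by positivity) (by positivity)]
    ring
  have e1 := Real.log_le_sub_one_of_pos (show (0:ℝ) < l*n/(m*k) by positivity)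
  have e2 := Real.log_le_sub_one_of_pos (show (0:ℝ) < (m-l)*n/(m*(n-k)) by positivity)
  have e3 := Real.log_le_sub_one_of_pos (show (0:ℝ) < (k-l)*n/((n-m)*k) by positivity)
  have e4 := Real.log_le_sub_one_of_pos (show (0:ℝ) < (n-k-m+l)*n/((n-m)*(n-k)) by positivity)
  have hsum : l * log (l*n/(m*k)) + (m-l) * log ((m-l)*n/(m*(n-k)))
      + (k-l) * log ((k-l)*n/((n-m)*k)) + (n-k-m+l) * log ((n-k-m+l)*n/((n-m)*(n-k)))
      ≤ l*(l*n/(m*k)-1) + (m-l)*((m-l)*n/(m*(n-k))-1) + (k-l)*((k-l)*n/((n-m)*k)-1)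
        + (n-k-m+l)*((n-k-m+l)*n/((n-m)*(n-k))-1) := by
    gcongr
  have hid : l*(l*n/(m*k)-1) + (m-l)*((m-l)*n/(m*(n-k))-1) + (k-l)*((k-l)*n/((n-m)*k)-1)
        + (n-k-m+l)*((n-k-m+l)*n/((n-m)*(n-k))-1)
      = ((l/m - k/n)^2 * m / ((k/n)*(1-k/n))) * (n/(n-m)) := by
    field_simp
    ring
  have hfrac : n/(n-m) ≤ 3 := by rw [div_le_iff₀ hnm]; linarith
  have hE : 0 ≤ (l/m - k/n)^2 * m / ((k/n)*(1-k/n)) := by positivity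
  have hfin : ((l/m - k/n)^2 * m / ((k/n)*(1-k/n))) * (n/(n-m))
      ≤ ((l/m - k/n)^2 * m / ((k/n)*(1-k/n))) * 3 :=
    mul_le_mul_of_nonneg_left hfrac hE
  have hneg : -3 * (l/m - k/n)^2 * m / ((k/n)*(1-k/n))
      = -(((l/m - k/n)^2 * m / ((k/n)*(1-k/n))) * 3) := by ring
  rw [hneg]
  linarith [hrw ▸ (hsum.trans (hid ▸ hfin))]

lemma hyplb_pref (n k m l : ℝ) (hl : 0 < l) (hlk : l < k) (hlm : l < m) (hkn : k < n)
    (hmn : 4*m ≤ n) (hj : 0 < n-k-m+l) :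
    Real.sqrt (π / (64 * m * (l/m) * (1 - l/m))) ≤
      Real.sqrt π ^ 4 * (Real.sqrt (2*k) * Real.sqrt (2*(n-k)) * Real.sqrt (2*m) * Real.sqrt (2*(n-m))) /
        ((exp 1 / Real.sqrt 2) ^ 5 *
          (Real.sqrt (2*l) * Real.sqrt (2*(k-l)) * Real.sqrt (2*(m-l)) * Real.sqrt (2*(n-k-m+l)) * Real.sqrt (2*n))) := by
  have hm : 0 < m := hl.trans hlm
  have hk : 0 < k := hl.trans hlk
  have hn : 0 < n := hk.trans hkn
  have hnk : 0 < n - k := by linarith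
  have hnm : 0 < n - m := by linarith
  have hml : 0 < m - l := by linarith
  have hkl : 0 < k - l := by linarith
  have hv0 : (0:ℝ) ≤ Real.sqrt π ^ 4 * (Real.sqrt (2*k) * Real.sqrt (2*(n-k)) * Real.sqrt (2*m) * Real.sqrt (2*(n-m))) /
        ((exp 1 / Real.sqrt 2) ^ 5 *
          (Real.sqrt (2*l) * Real.sqrt (2*(k-l)) * Real.sqrt (2*(m-l)) * Real.sqrt (2*(n-k-m+l)) * Real.sqrt (2*n))) := by positivity
  refine (Real.sqrt_le_sqrt ?_).trans_eq (Real.sqrt_sq hv0)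
  have hv2 : (Real.sqrt π ^ 4 * (Real.sqrt (2*k) * Real.sqrt (2*(n-k)) * Real.sqrt (2*m) * Real.sqrt (2*(n-m))) /
        ((exp 1 / Real.sqrt 2) ^ 5 *
          (Real.sqrt (2*l) * Real.sqrt (2*(k-l)) * Real.sqrt (2*(m-l)) * Real.sqrt (2*(n-k-m+l)) * Real.sqrt (2*n))))^2
      = π^4 * ((2*k)*(2*(n-k))*(2*m)*(2*(n-m))) /
        ((exp 1)^10 / 32 * ((2*l)*(2*(k-l))*(2*(m-l))*(2*(n-k-m+l))*(2*n))) := by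
    rw [div_pow, mul_pow, mul_pow, mul_pow, mul_pow, mul_pow, mul_pow, mul_pow, mul_pow, mul_pow, div_pow]
    rw [pow_right_comm (Real.sqrt π) 4 2, div_pow, pow_right_comm (Real.sqrt 2) 5 2,
      Real.sq_sqrt pi_pos.le,
      Real.sq_sqrt (by positivity : (0:ℝ) ≤ 2*k), Real.sq_sqrt (by positivity : (0:ℝ) ≤ 2*(n-k)),
      Real.sq_sqrt (by positivity : (0:ℝ) ≤ 2*m), Real.sq_sqrt (by positivity : (0:ℝ) ≤ 2*(n-m)),
      Real.sq_sqrt (by positivity : (0:ℝ) ≤ 2*l), Real.sq_sqrt (by positivity : (0:ℝ) ≤ 2*(k-l)),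
      Real.sq_sqrt (by positivity : (0:ℝ) ≤ 2*(m-l)), Real.sq_sqrt (by positivity : (0:ℝ) ≤ 2*(n-k-m+l)),
      Real.sq_sqrt (by positivity : (0:ℝ) ≤ 2*n), Real.sq_sqrt (by norm_num : (0:ℝ) ≤ 2)]
    ring
  rw [hv2]
  have hnum : exp 1 ^ 10 ≤ 768 * π^3 := by
    have h1 : exp 1 ≤ 2.7182818286 := Real.exp_one_lt_d9.le
    have h2 : exp 1 ^ 10 ≤ (2.7182818286:ℝ)^10 := pow_le_pow_left₀ (exp_pos 1).le h1 10
    have h3 : (3.141592:ℝ) ≤ π := Real.pi_gt_d6.le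
    have h4 : (3.141592:ℝ)^3 ≤ π^3 := pow_le_pow_left₀ (by norm_num) h3 3
    nlinarith [h2, h4]
  have hL : π / (64 * m * (l/m) * (1 - l/m)) = π * m / (64 * l * (m-l)) := by
    field_simp
  rw [hL, div_le_div_iff₀ (by positivity) (by positivity)]
  have key : exp 1 ^ 10 * ((k-l)*((n-k-m+l)*n)) ≤ 1024*π^3*(k*((n-k)*(n-m))) := by
    calc exp 1 ^ 10 * ((k-l)*((n-k-m+l)*n)) ≤ (768*π^3) * ((k-l)*((n-k-m+l)*n)) := by
          apply mul_le_mul_of_nonneg_right hnum (by positivity)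
      _ ≤ (768*π^3) * (k*((n-k)*((4/3)*(n-m)))) := by
          have hb1 : k - l ≤ k := by linarith
          have hb2 : n-k-m+l ≤ n-k := by linarith
          have hb3 : n ≤ (4/3)*(n-m) := by linarith
          have hp : (0:ℝ) < 768*π^3 := by positivity
          apply mul_le_mul_of_nonneg_left _ hp.le
          apply mul_le_mul hb1 _ (by positivity) (by linarith)
          apply mul_le_mul hb2 hb3 (by positivity) (by linarith)
      _ = 1024*π^3*(k*((n-k)*(n-m))) := by ring
  have hpos : (0:ℝ) ≤ π*m*l*(m-l) := by positivity
  nlinarith [mul_le_mul_of_nonneg_left key hpos]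

/-- Pointwise hypergeometric lower bound (Corollary C2): for `0 < ℓ < M`,
`a = ℓ/M`, `b = K/N`, `x = M/N` with `a ≤ 2b`, `1-a ≤ 2(1-b)`, `x ≤ 1/4`,
`Pr[X = ℓ] ≥ √(π/(64 M a (1-a))) · e^{-3(a-b)² M/(b(1-b))}`. -/
theorem hypergeometric_pointwise_lower_bound' (N K M ℓ : ℕ)
    (hℓ0 : 0 < ℓ) (hℓM : ℓ < M) (hK0 : 0 < K) (hKN : K < N)
    (hab1 : (ℓ:ℝ)/M ≤ 2 * ((K:ℝ)/N))
    (hab2 : 1 - (ℓ:ℝ)/M ≤ 2 * (1 - (K:ℝ)/N))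
    (hx : (M:ℝ)/N ≤ 1/4) :
    Real.sqrt (Real.pi / (64 * M * ((ℓ:ℝ)/M) * (1 - (ℓ:ℝ)/M)))
      * Real.exp (-3 * ((ℓ:ℝ)/M - (K:ℝ)/N)^2 * M / (((K:ℝ)/N) * (1 - (K:ℝ)/N)))
    ≤ (K.choose ℓ * (N - K).choose (M - ℓ) : ℝ) / (N.choose M) := by
  have hN0 : 0 < N := hK0.trans hKN
  have hM0 : 0 < M := hℓ0.trans hℓM
  have hNr : (0:ℝ) < N := by exact_mod_cast hN0
  have hMr : (0:ℝ) < M := by exact_mod_cast hM0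
  -- nat inequalities
  have hMN4 : 4*M ≤ N := by
    have h1 : (M:ℝ) ≤ N*(1/4) := by
      have := (div_le_iff₀ hNr).mp hx; linarith
    have : (4*M:ℝ) ≤ (N:ℝ) := by linarith
    exact_mod_cast this
  have h2lK : 2*ℓ ≤ K := by
    have h1 : (ℓ:ℝ) ≤ 2*((K:ℝ)/N)*M := by
      have := (div_le_iff₀ hMr).mp hab1; linarith
    have h2 : 2*((K:ℝ)/N)*M = 2*(K:ℝ)*((M:ℝ)/N) := by ring
    have h3 : 2*(K:ℝ)*((M:ℝ)/N) ≤ 2*(K:ℝ)*(1/4) :=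
      mul_le_mul_of_nonneg_left hx (by positivity)
    have : (2*ℓ:ℝ) ≤ (K:ℝ) := by linarith
    exact_mod_cast this
  have h2ml : 2*M + K ≤ N + 2*ℓ := by
    have hml : ((M:ℝ) - ℓ)/M = 1 - (ℓ:ℝ)/M := by field_simp
    have h1 : (M:ℝ) - ℓ ≤ 2*(1-(K:ℝ)/N)*M := by
      have := (div_le_iff₀ hMr).mp (hml ▸ hab2); linarith
    have h2 : 2*(1-(K:ℝ)/N)*M = 2*((N:ℝ)-K)*((M:ℝ)/N) := by field_simp
    have hKNr : (K:ℝ) ≤ N := by exact_mod_cast hKN.le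
    have h3 : 2*((N:ℝ)-K)*((M:ℝ)/N) ≤ 2*((N:ℝ)-K)*(1/4) :=
      mul_le_mul_of_nonneg_left hx (by linarith)
    have : (2*M:ℝ) + K ≤ (N:ℝ) + 2*ℓ := by linarith
    exact_mod_cast this
  have hℓK : ℓ < K := by omega
  have hMN : M < N := by omega
  have hMLNK : M - ℓ ≤ N - K := by omega
  -- cast equalities
  have cKL : ((K-ℓ:ℕ):ℝ) = (K:ℝ) - ℓ := by
    rw [Nat.cast_sub hℓK.le]
  have cNK : ((N-K:ℕ):ℝ) = (N:ℝ) - K := by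
    rw [Nat.cast_sub hKN.le]
  have cML : ((M-ℓ:ℕ):ℝ) = (M:ℝ) - ℓ := by
    rw [Nat.cast_sub hℓM.le]
  have cNM : ((N-M:ℕ):ℝ) = (N:ℝ) - M := by
    rw [Nat.cast_sub hMN.le]
  have cJ : ((N-K-(M-ℓ):ℕ):ℝ) = (N:ℝ) - K - M + ℓ := by
    rw [Nat.cast_sub hMLNK, Nat.cast_sub hKN.le, Nat.cast_sub hℓM.le]; ring
  -- real hypotheses for lemmas
  have hlr : (0:ℝ) < ℓ := by exact_mod_cast hℓ0
  have hlk : (ℓ:ℝ) < K := by exact_mod_cast hℓK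
  have hlm : (ℓ:ℝ) < M := by exact_mod_cast hℓM
  have hkn : (K:ℝ) < N := by exact_mod_cast hKN
  have hmn : 4*(M:ℝ) ≤ N := by exact_mod_cast hMN4
  have hj : (0:ℝ) < (N:ℝ) - K - M + ℓ := by
    have h1 : 1 ≤ N-K-(M-ℓ) := by omega
    have h2 : (1:ℝ) ≤ ((N-K-(M-ℓ):ℕ):ℝ) := by exact_mod_cast h1
    rw [cJ] at h2; linarith
  -- main inequalities from lemmas
  have hpref := hyplb_pref (N:ℝ) (K:ℝ) (M:ℝ) (ℓ:ℝ) hlr hlk hlm hkn hmn hj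
  have hexp := hyplb_exp_le_G (N:ℝ) (K:ℝ) (M:ℝ) (ℓ:ℝ) hlr hlk hlm hkn hmn hj
  -- convert rpow to nat pow in hexp
  rw [← cJ, ← cNK, ← cNM, ← cML, ← cKL] at hexp
  simp only [Real.rpow_natCast] at hexp
  rw [← cJ, ← cNK, ← cNM, ← cML, ← cKL] at hpref
  -- factorial bounds
  have f1 := hyplb_factorial_lower' K (by omega)
  have f2 := hyplb_factorial_lower' (N-K) (by omega)
  have f3 := hyplb_factorial_lower' M (by omega)
  have f4 := hyplb_factorial_lower' (N-M) (by omega)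
  have g1 := hyplb_factorial_upper' ℓ (by omega)
  have g2 := hyplb_factorial_upper' (K-ℓ) (by omega)
  have g3 := hyplb_factorial_upper' (M-ℓ) (by omega)
  have g4 := hyplb_factorial_upper' (N-K-(M-ℓ)) (by omega)
  have g5 := hyplb_factorial_upper' N (by omega)
  have hE4 : exp 1^K * exp 1^(N-K) * exp 1^M * exp 1^(N-M) = exp 1^(2*N) := by
    rw [← pow_add, ← pow_add, ← pow_add]; congr 1; omega
  have hE5 : exp 1^ℓ * exp 1^(K-ℓ) * exp 1^(M-ℓ) * exp 1^(N-K-(M-ℓ)) * exp 1^N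
      = exp 1^(2*N) := by
    rw [← pow_add, ← pow_add, ← pow_add, ← pow_add]; congr 1; omega
  have hnum : Real.sqrt π^4 * ((Real.sqrt (2*(K:ℝ)) * (K:ℝ)^K)
        * (Real.sqrt (2*((N-K:ℕ):ℝ)) * ((N-K:ℕ):ℝ)^(N-K))
        * (Real.sqrt (2*(M:ℝ)) * (M:ℝ)^M)
        * (Real.sqrt (2*((N-M:ℕ):ℝ)) * ((N-M:ℕ):ℝ)^(N-M)))
      ≤ ((K.factorial:ℝ) * (N-K).factorial * M.factorial * (N-M).factorial) * exp 1^(2*N) := by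
    have h := mul_le_mul (mul_le_mul (mul_le_mul f1 f2 (by positivity) (by positivity))
      f3 (by positivity) (by positivity)) f4 (by positivity) (by positivity)
    calc Real.sqrt π^4 * ((Real.sqrt (2*(K:ℝ)) * (K:ℝ)^K)
        * (Real.sqrt (2*((N-K:ℕ):ℝ)) * ((N-K:ℕ):ℝ)^(N-K))
        * (Real.sqrt (2*(M:ℝ)) * (M:ℝ)^M)
        * (Real.sqrt (2*((N-M:ℕ):ℝ)) * ((N-M:ℕ):ℝ)^(N-M)))
        = (Real.sqrt π * (Real.sqrt (2*(K:ℝ)) * (K:ℝ)^K))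
          * (Real.sqrt π * (Real.sqrt (2*((N-K:ℕ):ℝ)) * ((N-K:ℕ):ℝ)^(N-K)))
          * (Real.sqrt π * (Real.sqrt (2*(M:ℝ)) * (M:ℝ)^M))
          * (Real.sqrt π * (Real.sqrt (2*((N-M:ℕ):ℝ)) * ((N-M:ℕ):ℝ)^(N-M))) := by ring
      _ ≤ ((K.factorial:ℝ) * exp 1^K) * ((N-K).factorial * exp 1^(N-K))
          * (M.factorial * exp 1^M) * ((N-M).factorial * exp 1^(N-M)) := h
      _ = ((K.factorial:ℝ) * (N-K).factorial * M.factorial * (N-M).factorial)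
          * (exp 1^K * exp 1^(N-K) * exp 1^M * exp 1^(N-M)) := by ring
      _ = ((K.factorial:ℝ) * (N-K).factorial * M.factorial * (N-M).factorial) * exp 1^(2*N) := by
          rw [hE4]
  have hden : ((ℓ.factorial:ℝ) * (K-ℓ).factorial * (M-ℓ).factorial * (N-K-(M-ℓ)).factorial
        * N.factorial) * exp 1^(2*N)
      ≤ (exp 1 / Real.sqrt 2)^5 * ((Real.sqrt (2*(ℓ:ℝ)) * (ℓ:ℝ)^ℓ)
        * (Real.sqrt (2*((K-ℓ:ℕ):ℝ)) * ((K-ℓ:ℕ):ℝ)^(K-ℓ))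
        * (Real.sqrt (2*((M-ℓ:ℕ):ℝ)) * ((M-ℓ:ℕ):ℝ)^(M-ℓ))
        * (Real.sqrt (2*((N-K-(M-ℓ):ℕ):ℝ)) * ((N-K-(M-ℓ):ℕ):ℝ)^(N-K-(M-ℓ)))
        * (Real.sqrt (2*(N:ℝ)) * (N:ℝ)^N)) := by
    have h := mul_le_mul (mul_le_mul (mul_le_mul (mul_le_mul g1 g2 (by positivity) (by positivity))
      g3 (by positivity) (by positivity)) g4 (by positivity) (by positivity))
      g5 (by positivity) (by positivity)
    calc ((ℓ.factorial:ℝ) * (K-ℓ).factorial * (M-ℓ).factorial * (N-K-(M-ℓ)).factorial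
        * N.factorial) * exp 1^(2*N)
        = ((ℓ.factorial:ℝ) * exp 1^ℓ) * ((K-ℓ).factorial * exp 1^(K-ℓ))
          * ((M-ℓ).factorial * exp 1^(M-ℓ)) * ((N-K-(M-ℓ)).factorial * exp 1^(N-K-(M-ℓ)))
          * (N.factorial * exp 1^N) := by rw [← hE5]; ring
      _ ≤ ((exp 1 / Real.sqrt 2) * (Real.sqrt (2*(ℓ:ℝ)) * (ℓ:ℝ)^ℓ))
          * ((exp 1 / Real.sqrt 2) * (Real.sqrt (2*((K-ℓ:ℕ):ℝ)) * ((K-ℓ:ℕ):ℝ)^(K-ℓ)))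
          * ((exp 1 / Real.sqrt 2) * (Real.sqrt (2*((M-ℓ:ℕ):ℝ)) * ((M-ℓ:ℕ):ℝ)^(M-ℓ)))
          * ((exp 1 / Real.sqrt 2) * (Real.sqrt (2*((N-K-(M-ℓ):ℕ):ℝ)) * ((N-K-(M-ℓ):ℕ):ℝ)^(N-K-(M-ℓ))))
          * ((exp 1 / Real.sqrt 2) * (Real.sqrt (2*(N:ℝ)) * (N:ℝ)^N)) := h
      _ = (exp 1 / Real.sqrt 2)^5 * ((Real.sqrt (2*(ℓ:ℝ)) * (ℓ:ℝ)^ℓ)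
          * (Real.sqrt (2*((K-ℓ:ℕ):ℝ)) * ((K-ℓ:ℕ):ℝ)^(K-ℓ))
          * (Real.sqrt (2*((M-ℓ:ℕ):ℝ)) * ((M-ℓ:ℕ):ℝ)^(M-ℓ))
          * (Real.sqrt (2*((N-K-(M-ℓ):ℕ):ℝ)) * ((N-K-(M-ℓ):ℕ):ℝ)^(N-K-(M-ℓ)))
          * (Real.sqrt (2*(N:ℝ)) * (N:ℝ)^N)) := by ring
  have fne : ∀ j:ℕ, ((j.factorial:ℝ)) ≠ 0 := fun j => by
    exact_mod_cast (Nat.factorial_pos j).ne'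
  have hfact : ((K.choose ℓ:ℝ) * ((N-K).choose (M-ℓ):ℝ)) / ((N.choose M:ℝ))
      = ((K.factorial:ℝ) * (N-K).factorial * M.factorial * (N-M).factorial)
        / ((ℓ.factorial:ℝ) * (K-ℓ).factorial * (M-ℓ).factorial * (N-K-(M-ℓ)).factorial
          * N.factorial) := by
    rw [Nat.cast_choose ℝ hℓK.le, Nat.cast_choose ℝ hMLNK, Nat.cast_choose ℝ hMN.le]
    field_simp [fne ℓ, fne (K-ℓ), fne (M-ℓ), fne (N-K-(M-ℓ)), fne N, fne M, fne (N-M),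
      fne K, fne (N-K)]
  have fpos : ∀ j:ℕ, (0:ℝ) < j.factorial := fun j => by exact_mod_cast j.factorial_pos
  have he2 : (exp 1:ℝ)^(2*N) ≠ 0 := by positivity
  have hdpos : (0:ℝ) < ((ℓ.factorial:ℝ) * (K-ℓ).factorial * (M-ℓ).factorial
      * (N-K-(M-ℓ)).factorial * N.factorial) * exp 1^(2*N) :=
    mul_pos (mul_pos (mul_pos (mul_pos (mul_pos (fpos ℓ) (fpos (K-ℓ))) (fpos (M-ℓ)))
      (fpos (N-K-(M-ℓ)))) (fpos N)) (by positivity)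
  calc Real.sqrt (π / (64 * (M:ℝ) * ((ℓ:ℝ)/M) * (1 - (ℓ:ℝ)/M)))
      * Real.exp (-3 * ((ℓ:ℝ)/M - (K:ℝ)/N)^2 * M / (((K:ℝ)/N) * (1 - (K:ℝ)/N)))
      ≤ (Real.sqrt π^4 * (Real.sqrt (2*(K:ℝ)) * Real.sqrt (2*((N-K:ℕ):ℝ)) * Real.sqrt (2*(M:ℝ))
            * Real.sqrt (2*((N-M:ℕ):ℝ))) /
          ((exp 1/Real.sqrt 2)^5 * (Real.sqrt (2*(ℓ:ℝ)) * Real.sqrt (2*((K-ℓ:ℕ):ℝ))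
            * Real.sqrt (2*((M-ℓ:ℕ):ℝ)) * Real.sqrt (2*((N-K-(M-ℓ):ℕ):ℝ)) * Real.sqrt (2*(N:ℝ)))))
        * ((K:ℝ)^K * ((N-K:ℕ):ℝ)^(N-K) * (M:ℝ)^M * ((N-M:ℕ):ℝ)^(N-M) /
          ((ℓ:ℝ)^ℓ * ((K-ℓ:ℕ):ℝ)^(K-ℓ) * ((M-ℓ:ℕ):ℝ)^(M-ℓ)
            * ((N-K-(M-ℓ):ℕ):ℝ)^(N-K-(M-ℓ)) * (N:ℝ)^N)) :=
        mul_le_mul hpref hexp (Real.exp_pos _).le (by positivity)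
    _ = Real.sqrt π^4 * ((Real.sqrt (2*(K:ℝ)) * (K:ℝ)^K)
          * (Real.sqrt (2*((N-K:ℕ):ℝ)) * ((N-K:ℕ):ℝ)^(N-K))
          * (Real.sqrt (2*(M:ℝ)) * (M:ℝ)^M)
          * (Real.sqrt (2*((N-M:ℕ):ℝ)) * ((N-M:ℕ):ℝ)^(N-M))) /
        ((exp 1/Real.sqrt 2)^5 * ((Real.sqrt (2*(ℓ:ℝ)) * (ℓ:ℝ)^ℓ)
          * (Real.sqrt (2*((K-ℓ:ℕ):ℝ)) * ((K-ℓ:ℕ):ℝ)^(K-ℓ))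
          * (Real.sqrt (2*((M-ℓ:ℕ):ℝ)) * ((M-ℓ:ℕ):ℝ)^(M-ℓ))
          * (Real.sqrt (2*((N-K-(M-ℓ):ℕ):ℝ)) * ((N-K-(M-ℓ):ℕ):ℝ)^(N-K-(M-ℓ)))
          * (Real.sqrt (2*(N:ℝ)) * (N:ℝ)^N))) := by
        rw [div_mul_div_comm]; ring
    _ ≤ (((K.factorial:ℝ) * (N-K).factorial * M.factorial * (N-M).factorial) * exp 1^(2*N))
        / (((ℓ.factorial:ℝ) * (K-ℓ).factorial * (M-ℓ).factorial * (N-K-(M-ℓ)).factorial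
          * N.factorial) * exp 1^(2*N)) :=
        div_le_div₀ (by positivity) hnum hdpos hden
    _ = ((K.factorial:ℝ) * (N-K).factorial * M.factorial * (N-M).factorial)
        / ((ℓ.factorial:ℝ) * (K-ℓ).factorial * (M-ℓ).factorial * (N-K-(M-ℓ)).factorial
          * N.factorial) := mul_div_mul_right _ _ he2
    _ = ((K.choose ℓ:ℝ) * ((N-K).choose (M-ℓ):ℝ)) / ((N.choose M:ℝ)) := hfact.symm
end

section
/- Fix error probability p ∈ [0, 1/2) and let c = ⌈4(1-p)/(1-2p)²⌉. For any positive integer t, if one flips 2ct+1 independent coins that each land heads with probability 1-p, the probability that at most ct of them land heads is at most e^{-t}. Equivalently, ∑_{i=0}^{ct} C(2ct+1, i)·(1-p)^i·p^{2ct+1-i} ≤ e^{-t}. -/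
/-- Majority vote: with error probability `p ∈ [0, 1/2)` and `c = ⌈4(1-p)/(1-2p)²⌉`,
for every positive integer `t` the probability that at most `c·t` of `2ct+1` independent
coins (each heads with probability `1-p`) land heads is at most `e^{-t}`. -/
theorem majority_vote_failure_bound (p : ℝ) (hp : p ∈ Set.Ico (0:ℝ) (1/2))
    (t : ℕ) (ht : 0 < t) (c : ℕ) (hc : (c:ℝ) = ⌈4 * (1-p) / (1-2*p)^2⌉) :
    ∑ i ∈ Finset.range (c*t + 1),
        ((2*c*t + 1).choose i : ℝ) * (1-p)^i * p^(2*c*t + 1 - i)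
      ≤ Real.exp (-(t:ℝ)) := by
  obtain ⟨hp0, hp2⟩ := hp
  have hp1 : p ≤ 1 - p := by linarith
  have h1p : (0:ℝ) ≤ 1 - p := by linarith
  have hqpos : (0:ℝ) < 1 - 2*p := by linarith
  have e1 : 2*c*t + 1 = 2*(c*t) + 1 := by ring
  rw [e1]
  set m := c*t with hm
  -- Step 1: termwise bound
  have key : ∀ i ∈ Finset.range (m+1),
      (((2*m+1).choose i : ℝ)) * (1-p)^i * p^(2*m+1 - i)
        ≤ (((2*m+1).choose i : ℝ)) * ((1-p)^m * p^(m+1)) := by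
    intro i hi
    have hi' : i ≤ m := Finset.mem_range_succ_iff.mp hi
    have hni : 2*m+1 - i = (m - i) + (m + 1) := by omega
    rw [hni, pow_add, mul_assoc]
    have h2 : (1-p)^i * (p^(m-i) * p^(m+1)) ≤ (1-p)^m * p^(m+1) := by
      rw [← mul_assoc]
      have h3 : (1-p)^i * p^(m-i) ≤ (1-p)^i * (1-p)^(m-i) := by
        apply mul_le_mul_of_nonneg_left (pow_le_pow_left₀ hp0 hp1 _) (by positivity)
      calc (1-p)^i * p^(m-i) * p^(m+1)
          ≤ (1-p)^i * (1-p)^(m-i) * p^(m+1) := by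
            apply mul_le_mul_of_nonneg_right h3 (by positivity)
        _ = (1-p)^m * p^(m+1) := by rw [← pow_add]; congr 2; omega
    exact mul_le_mul_of_nonneg_left h2 (by positivity)
  have hchoose : (∑ i ∈ Finset.range (m + 1), (((2*m + 1).choose i : ℕ) : ℝ))
      = (4:ℝ)^m := by
    exact_mod_cast congrArg (Nat.cast (R := ℝ)) (Nat.sum_range_choose_halfway m)
  have hsum : ∑ i ∈ Finset.range (m + 1),
        ((2*m + 1).choose i : ℝ) * (1-p)^i * p^(2*m + 1 - i)
      ≤ (4:ℝ)^m * ((1-p)^m * p^(m+1)) := by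
    calc ∑ i ∈ Finset.range (m + 1),
          ((2*m + 1).choose i : ℝ) * (1-p)^i * p^(2*m + 1 - i)
        ≤ ∑ i ∈ Finset.range (m + 1),
            ((2*m + 1).choose i : ℝ) * ((1-p)^m * p^(m+1)) :=
          Finset.sum_le_sum key
      _ = (∑ i ∈ Finset.range (m + 1), ((2*m + 1).choose i : ℝ))
            * ((1-p)^m * p^(m+1)) := by rw [Finset.sum_mul]
      _ = (4:ℝ)^m * ((1-p)^m * p^(m+1)) := by rw [hchoose]
  -- Step 2: collect powers
  have hstep2 : (4:ℝ)^m * ((1-p)^m * p^(m+1)) ≤ (4*p*(1-p))^m := by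
    have h4 : (4*p*(1-p))^m = (4:ℝ)^m * ((1-p)^m * p^m) := by
      rw [mul_pow, mul_pow]; ring
    rw [h4, pow_succ]
    have hple : p^m * p ≤ p^m * 1 := by
      apply mul_le_mul_of_nonneg_left (by linarith) (by positivity)
    nlinarith [pow_nonneg hp0 m, pow_nonneg h1p m,
      mul_le_mul_of_nonneg_left hple
        (mul_nonneg (by positivity : (0:ℝ) ≤ (4:ℝ)^m) (pow_nonneg h1p m))]
  -- Step 3: 4p(1-p) = 1-(1-2p)^2 ≤ exp(-(1-2p)^2)
  have hbase : 4*p*(1-p) ≤ Real.exp (-(1-2*p)^2) := by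
    have := Real.add_one_le_exp (-(1-2*p)^2)
    nlinarith
  have hbase0 : (0:ℝ) ≤ 4*p*(1-p) := by positivity
  have hstep3 : (4*p*(1-p))^m ≤ Real.exp (-(1-2*p)^2)^m :=
    pow_le_pow_left₀ hbase0 hbase _
  have hexp : Real.exp (-(1-2*p)^2)^m = Real.exp (-(m:ℝ) * (1-2*p)^2) := by
    rw [← Real.exp_nat_mul]; ring_nf
  -- Step 4: c*(1-2p)^2 ≥ 1
  have hcge : 4*(1-p)/(1-2*p)^2 ≤ (c:ℝ) := by
    rw [hc]; exact Int.le_ceil _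
  have hc1 : 1 ≤ (c:ℝ) * (1-2*p)^2 := by
    have hq2 : (0:ℝ) < (1-2*p)^2 := by positivity
    have := (div_le_iff₀ hq2).mp hcge
    nlinarith
  have hfinal : ((t:ℝ)) ≤ (m:ℝ) * (1-2*p)^2 := by
    rw [hm]
    push_cast
    have ht' : (1:ℝ) ≤ (t:ℝ) := by exact_mod_cast ht
    nlinarith
  calc ∑ i ∈ Finset.range (m + 1),
        ((2*m + 1).choose i : ℝ) * (1-p)^i * p^(2*m + 1 - i)
      ≤ (4:ℝ)^m * ((1-p)^m * p^(m+1)) := hsum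
    _ ≤ (4*p*(1-p))^m := hstep2
    _ ≤ Real.exp (-(1-2*p)^2)^m := hstep3
    _ = Real.exp (-(m:ℝ) * (1-2*p)^2) := hexp
    _ ≤ Real.exp (-(t:ℝ)) := by
        apply Real.exp_le_exp.mpr; linarith
end

section
/- Let p_s ∈ [0, 1/2 - ε] with ε ∈ (0, 1/6), and let p₁ ∈ [0, 1/26]. Then p_s³ + 3p_s²(1-p_s)(1-p₁) + 3p_s(1-p_s)²·p₁ ≤ 1/2 - (4/3)ε. -/
/-- If `p_s ∈ [0, 1/2 - ε]` with `ε ∈ (0, 1/6)` and `p₁ ∈ [0, 1/26]`, then the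
probability that the noisy median of three samples is small satisfies
`p_s³ + 3p_s²(1-p_s)(1-p₁) + 3p_s(1-p_s)²p₁ ≤ 1/2 - (4/3)ε`. -/
theorem noisy_median_small_probability (ε ps p₁ : ℝ)
    (hε0 : 0 < ε) (hε : ε < 1/6)
    (hps0 : 0 ≤ ps) (hps : ps ≤ 1/2 - ε)
    (hp₁0 : 0 ≤ p₁) (hp₁ : p₁ ≤ 1/26) :
    ps^3 + 3*ps^2*(1-ps)*(1-p₁) + 3*ps*(1-ps)^2*p₁ ≤ 1/2 - (4/3)*ε := by
  have hps2 : ps ≤ 1/2 := by linarith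
  have hc : 0 ≤ 3*ps*(1-ps)*(1-2*ps) :=
    mul_nonneg (mul_nonneg (by linarith) (by linarith)) (by linarith)
  have h1 : ps^3 + 3*ps^2*(1-ps)*(1-p₁) + 3*ps*(1-ps)^2*p₁
      ≤ (-46*ps^3 + 69*ps^2 + 3*ps)/26 := by
    nlinarith [mul_nonneg (by linarith : (0:ℝ) ≤ 1/26 - p₁) hc]
  have hmono : -46*ps^3 + 69*ps^2 + 3*ps
      ≤ -46*(1/2-ε)^3 + 69*(1/2-ε)^2 + 3*(1/2-ε) := by
    nlinarith [mul_nonneg (by linarith : (0:ℝ) ≤ 1/2 - ε - ps)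
      (by nlinarith : (0:ℝ) ≤ -46*((1/2-ε)^2 + (1/2-ε)*ps + ps^2) + 69*((1/2-ε)+ps) + 3)]
  have hε2 : ε^2 ≤ 1/36 := by nlinarith
  have h3 : (-46*(1/2-ε)^3 + 69*(1/2-ε)^2 + 3*(1/2-ε))/26 ≤ 1/2 - (4/3)*ε := by
    nlinarith [mul_nonneg hε0.le (by linarith : (0:ℝ) ≤ 1/36 - ε^2)]
  linarith
end

section
/- Define sequences by β₀ = β, ε₀ = ε, ε_{i} = (3/2)^i·ε, and β_{i} = (2β_{i-1} - β_{i-1}² - ε_{i-1}²) - 2q(β_{i-1} - β_{i-1}² - ε_{i-1}²) for some fixed q ∈ [0, 1/20). Suppose β > 2ε and β_i < 1/8 for all i < L. Then for all 0 ≤ i ≤ L: β_i > 2ε_i and β_i ≤ 2^i·β. -/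
/-- Invariants of the purifying process: with `β₀ = β`, `ε_i = (3/2)^i ε`,
`β_i = (2β_{i-1} - β_{i-1}² - ε_{i-1}²) - 2q(β_{i-1} - β_{i-1}² - ε_{i-1}²)` for
`q ∈ [0, 1/20)`, if `β > 2ε` and `β_i < 1/8` for all `i < L`, then for all `0 ≤ i ≤ L`
we have `β_i > 2ε_i` and `β_i ≤ 2^i β`. -/
theorem purifying_invariant (β ε q : ℝ) (L : ℕ) (bs : ℕ → ℝ)
    (hε : 0 < ε) (hβε : 2*ε < β) (hβ : β < 1/8)
    (hq0 : 0 ≤ q) (hq : q < 1/20)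
    (h0 : bs 0 = β)
    (hrec : ∀ i : ℕ, bs (i+1) =
      (2 * bs i - (bs i)^2 - ((3/2:ℝ)^i * ε)^2)
        - 2*q*(bs i - (bs i)^2 - ((3/2:ℝ)^i * ε)^2))
    (hL : ∀ i < L, bs i < 1/8) :
    ∀ i ≤ L, 2 * ((3/2:ℝ)^i * ε) < bs i ∧ bs i ≤ 2^i * β := by
  intro i hi
  induction i with
  | zero => simp [h0]; linarith
  | succ n ih =>
    have hn : n < L := hi
    obtain ⟨h1, h2⟩ := ih (le_of_lt hn)
    have hb8 := hL n hn
    set b := bs n with hb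
    set e := (3/2:ℝ)^n * ε with he'
    have he : 0 < e := by positivity
    have hb0 : 0 < b := by linarith
    have hrecn := hrec n
    have key : 0 < b - b^2 - e^2 := by nlinarith
    have hqb : q * (b - b^2 - e^2) ≤ q * b := by nlinarith
    have hqb2 : q * b ≤ b / 20 := by nlinarith
    constructor
    · have hpow : (3/2:ℝ)^(n+1) * ε = (3/2) * e := by rw [he']; ring
      rw [hrecn, hpow]
      nlinarith
    · rw [hrecn]
      have hpow : (2:ℝ)^(n+1) * β = 2 * (2^n * β) := by ring
      rw [hpow]
      nlinarith [mul_nonneg hq0 key.le, sq_nonneg b, sq_nonneg e]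
end

section
/- Let n_i = ⌈2000·i·(4/5)^{2i}·ε^{-2}⌉ and ε_i = (5/4)^i·ε with ε_i ≤ 1/6. Let X_i be a sum of n_i independent Bernoulli random variables each with success probability at most 1/2 - (4/3)·ε_{i-1} = 1/2 - (16/15)·ε_i. Then Pr[X_i ≥ (1/2 - ε_i)·n_i] ≤ e^{-5i} for all integers i ≥ 1. -/
open MeasureTheory ProbabilityTheory

set_option maxHeartbeats 1000000

/-- Chernoff step of the approximate median purification: with
`n_i = ⌈2000·i·(4/5)^{2i}·ε⁻²⌉`, `ε_i = (5/4)^i ε ≤ 1/6`, and `X_i` a sum of `n_i`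
independent Bernoulli random variables with success probability at most
`1/2 - (16/15)ε_i`, we have `Pr[X_i ≥ (1/2 - ε_i)·n_i] ≤ e^{-5i}` for `i ≥ 1`. -/
theorem purifying_chernoff_step {Ω : Type*} [MeasurableSpace Ω]
    (μ : Measure Ω) [IsProbabilityMeasure μ]
    (ε : ℝ) (hε : 0 < ε) (i : ℕ) (hi : 1 ≤ i)
    (hεi : (5/4:ℝ)^i * ε ≤ 1/6)
    (n : ℕ) (hn : (n:ℝ) = ⌈(2000 * i * (4/5:ℝ)^(2*i) * (ε^2)⁻¹ : ℝ)⌉)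
    (X : Fin n → Ω → ℝ)
    (hmeas : ∀ j, Measurable (X j))
    (hind : iIndepFun X μ)
    (hBer01 : ∀ j ω, X j ω = 0 ∨ X j ω = 1)
    (hBerp : ∀ j, μ {ω | X j ω = 1}
      ≤ ENNReal.ofReal (1/2 - (16/15) * ((5/4:ℝ)^i * ε))) :
    (μ {ω | (1/2 - (5/4:ℝ)^i * ε) * (n:ℝ) ≤ ∑ j, X j ω}).toReal
      ≤ Real.exp (-(5*i : ℝ)) := by
  set εi : ℝ := (5/4:ℝ)^i * ε with hεidef
  have hεi0 : 0 < εi := mul_pos (pow_pos (by norm_num) i) hε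
  set p : ℝ := 1/2 - (16/15) * εi with hpdef
  have hp0 : 0 ≤ p := by
    have : (16/15:ℝ) * εi ≤ (16/15) * (1/6) :=
      mul_le_mul_of_nonneg_left hεi (by norm_num)
    simp only [hpdef]; linarith
  have hphalf : p ≤ 1/2 := by
    simp only [hpdef]; nlinarith
  set t : ℝ := (4/45) * εi with htdef
  have ht0 : 0 < t := by positivity
  have ht1 : t ≤ 1 := by
    simp only [htdef]; nlinarith
  -- bounds on X j
  have hX0 : ∀ j ω, 0 ≤ X j ω := by
    intro j ω; rcases hBer01 j ω with h | h <;> rw [h] <;> norm_num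
  have hX1 : ∀ j ω, X j ω ≤ 1 := by
    intro j ω; rcases hBer01 j ω with h | h <;> rw [h] <;> norm_num
  -- integrability
  have hint : ∀ j : Fin n, Integrable (fun ω => Real.exp (t * X j ω)) μ := by
    intro j
    refine (integrable_const (Real.exp t)).mono'
      ((hmeas j).const_mul t).exp.aestronglyMeasurable ?_
    filter_upwards with ω
    rw [Real.norm_eq_abs, abs_of_pos (Real.exp_pos _), Real.exp_le_exp]
    nlinarith [hX1 j ω, hX0 j ω]
  have hintS : Integrable (fun ω => Real.exp (t * (∑ j, X j) ω)) μ :=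
    hind.integrable_exp_mul_sum hmeas (fun j _ => hint j)
  -- Chernoff
  have hset : {ω | (1/2 - (5/4:ℝ)^i * ε) * (n:ℝ) ≤ ∑ j, X j ω}
      = {ω | (1/2 - εi) * (n:ℝ) ≤ (∑ j, X j) ω} := by
    ext ω; simp [hεidef]
  rw [hset]
  have hcher := measure_ge_le_exp_mul_mgf (X := ∑ j, X j) (μ := μ)
    ((1/2 - εi) * (n:ℝ)) ht0.le hintS
  refine hcher.trans ?_
  -- per-variable mgf bound
  have hmgf : ∀ j : Fin n, mgf (X j) μ t ≤ 1 + p * (Real.exp t - 1) := by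
    intro j
    have hA : MeasurableSet {ω | X j ω = 1} := (hmeas j) (measurableSet_singleton 1)
    have hXind : (X j) = Set.indicator {ω | X j ω = 1} 1 := by
      funext ω
      rcases hBer01 j ω with h | h
      · rw [h, Set.indicator_apply]
        simp only [Set.mem_setOf_eq, h]
        norm_num
      · rw [h, Set.indicator_apply]
        simp only [Set.mem_setOf_eq, h]
        norm_num
    have hEX : ∫ ω, X j ω ∂μ = (μ {ω | X j ω = 1}).toReal := by
      conv_lhs => rw [show (fun ω => X j ω) = X j from rfl, hXind]
      exact integral_indicator_one hA
    have hEXp : ∫ ω, X j ω ∂μ ≤ p := by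
      rw [hEX]
      exact ENNReal.toReal_le_of_le_ofReal hp0 (hBerp j)
    have hexp_eq : ∀ ω, Real.exp (t * X j ω) = 1 + (Real.exp t - 1) * X j ω := by
      intro ω
      rcases hBer01 j ω with h | h <;> rw [h] <;> simp
    have hXint : Integrable (X j) μ := by
      refine (integrable_const (1:ℝ)).mono'
        (hmeas j).aestronglyMeasurable ?_
      filter_upwards with ω
      rw [Real.norm_eq_abs, abs_of_nonneg (hX0 j ω)]
      exact hX1 j ω
    have hmgf_eq : mgf (X j) μ t = 1 + (Real.exp t - 1) * ∫ ω, X j ω ∂μ := by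
      unfold mgf
      rw [show (fun ω => Real.exp (t * X j ω))
          = (fun ω => 1 + (Real.exp t - 1) * X j ω) from funext hexp_eq]
      rw [integral_add (integrable_const 1) (hXint.const_mul _)]
      rw [integral_const_mul]
      simp
    rw [hmgf_eq]
    have het1 : 0 ≤ Real.exp t - 1 := by
      linarith [Real.one_le_exp ht0.le]
    nlinarith [hEXp]
  -- product bound
  have hprod : mgf (∑ j, X j) μ t ≤ (1 + p * (Real.exp t - 1)) ^ n := by
    rw [hind.mgf_sum hmeas Finset.univ]
    calc ∏ j : Fin n, mgf (X j) μ t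
        ≤ ∏ _j : Fin n, (1 + p * (Real.exp t - 1)) :=
          Finset.prod_le_prod (fun j _ => mgf_nonneg) (fun j _ => hmgf j)
      _ = (1 + p * (Real.exp t - 1)) ^ n := by simp
  have het1 : 0 ≤ Real.exp t - 1 := by linarith [Real.one_le_exp ht0.le]
  have hc0 : 0 ≤ p * (Real.exp t - 1) := mul_nonneg hp0 het1
  have hpow : (1 + p * (Real.exp t - 1)) ^ n
      ≤ Real.exp ((n:ℝ) * (p * (Real.exp t - 1))) := by
    rw [Real.exp_nat_mul]
    exact pow_le_pow_left₀ (by linarith)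
      (by linarith [Real.add_one_le_exp (p * (Real.exp t - 1))]) n
  -- numeric part
  have hnlb : 2000 * (i:ℝ) * (4/5:ℝ)^(2*i) * (ε^2)⁻¹ ≤ (n:ℝ) := by
    rw [hn]; exact Int.le_ceil _
  have hkey : 2000 * (i:ℝ) ≤ εi^2 * (n:ℝ) := by
    have hmul : (4/5:ℝ)^(2*i) * (5/4:ℝ)^(2*i) = 1 := by
      rw [← mul_pow]; norm_num
    have hεisq : εi^2 = (5/4:ℝ)^(2*i) * ε^2 := by
      rw [hεidef, mul_pow, ← pow_mul, mul_comm i 2]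
    have hε2 : (ε^2) * (ε^2)⁻¹ = 1 := mul_inv_cancel₀ (pow_ne_zero 2 hε.ne')
    have h1 : εi^2 * (2000 * (i:ℝ) * (4/5:ℝ)^(2*i) * (ε^2)⁻¹) = 2000 * (i:ℝ) := by
      rw [hεisq]
      calc ((5/4:ℝ)^(2*i) * ε^2) * (2000 * (i:ℝ) * (4/5:ℝ)^(2*i) * (ε^2)⁻¹)
          = 2000 * (i:ℝ) * ((4/5:ℝ)^(2*i) * (5/4:ℝ)^(2*i)) * ((ε^2) * (ε^2)⁻¹) := by
            ring
        _ = 2000 * (i:ℝ) := by rw [hmul, hε2]; ring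
    calc 2000 * (i:ℝ) = εi^2 * (2000 * (i:ℝ) * (4/5:ℝ)^(2*i) * (ε^2)⁻¹) := h1.symm
      _ ≤ εi^2 * (n:ℝ) := mul_le_mul_of_nonneg_left hnlb (by positivity)
  -- e^t ≤ 1 + t + (3/4) t^2
  have hexpb : Real.exp t ≤ 1 + t + (3/4) * t^2 := by
    have h := Real.exp_bound (x := t) (by rw [abs_of_pos ht0]; exact ht1)
      (n := 2) (by norm_num)
    have h2 : |Real.exp t - (1 + t)| ≤ t^2 * (3/4) := by
      have hs : ∑ m ∈ Finset.range 2, t ^ m / (m.factorial : ℝ) = 1 + t := by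
        simp [Finset.sum_range_succ]
      rw [hs, abs_of_pos ht0] at h
      convert h using 2
      norm_num
    have := (abs_sub_le_iff.1 h2).1
    linarith
  -- conclude
  calc Real.exp (-t * ((1/2 - εi) * (n:ℝ))) * mgf (∑ j, X j) μ t
      ≤ Real.exp (-t * ((1/2 - εi) * (n:ℝ)))
        * Real.exp ((n:ℝ) * (p * (Real.exp t - 1))) :=
        mul_le_mul_of_nonneg_left (hprod.trans hpow) (Real.exp_pos _).le
    _ = Real.exp (-t * ((1/2 - εi) * (n:ℝ)) + (n:ℝ) * (p * (Real.exp t - 1))) := by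
        rw [← Real.exp_add]
    _ ≤ Real.exp (-(5*i : ℝ)) := by
        rw [Real.exp_le_exp]
        have hn0 : (0:ℝ) ≤ (n:ℝ) := Nat.cast_nonneg n
        have hbound : (n:ℝ) * (p * (Real.exp t - 1))
            ≤ (n:ℝ) * (p * (t + (3/4) * t^2)) := by
          apply mul_le_mul_of_nonneg_left _ hn0
          apply mul_le_mul_of_nonneg_left _ hp0
          linarith
        have hq : -t * ((1/2 - εi) * (n:ℝ)) + (n:ℝ) * (p * (t + (3/4) * t^2))
            ≤ -(5*i : ℝ) := by
          have hsub : (n:ℝ) * (p * (t + (3/4)*t^2))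
              ≤ (n:ℝ) * (p * t) + (3/8) * ((n:ℝ) * t^2) := by
            nlinarith [mul_nonneg hn0 (sq_nonneg t)]
          have hlin : -t * ((1/2 - εi) * (n:ℝ)) + (n:ℝ) * (p * t)
              = -(1/15) * εi * t * (n:ℝ) := by
            simp only [hpdef]; ring
          have hfin : -(1/15) * εi * t * (n:ℝ) + (3/8) * ((n:ℝ) * t^2)
              = -(2/675) * (εi^2 * (n:ℝ)) := by
            simp only [htdef]; ring
          have hi0 : (0:ℝ) ≤ (i:ℝ) := Nat.cast_nonneg i
          have hlast : -(2/675) * (εi^2 * (n:ℝ)) ≤ -(5*i:ℝ) := by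
            linarith
          linarith
        linarith
end
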